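/- arXiv:1906.04871 — 11 statements merged into one kernel-verified Lean document; each statement's English description precedes it below -/
import Mathlib

section
/- Let k be a natural number and let M be a matroid of rank at least k, i.e. some independent set of M has encard ≥ k. Then there exists a matroid M[k] with the same ground set as M whose independent sets are exactly the sets S for which there exists T with M.Indep T, S ⊆ T and (T \ S).encard = k. -/
/-!
For an independent set `S`, the sets `T \ S` with `S ⊆ T` independent are exactly the independent
sets of the contraction `M ／ S`; hence `S` is independent in the truncation iff `M.Indep S` and
`k ≤ (M ／ S).eRank`. For independent `I ⊆ J` the contracted rank is additive,
`(M ／ I).eRank = (M ／ J).eRank + |J \ I|`, so the bases of the truncation are the independent `J`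
with `(M ／ J).eRank = k`. Augmentation holds because `(M ／ I).eRank ≤ (M ／ J).eRank` whenever
`J ⊆ M.closure I`, and maximality inside `X` is obtained by removing `k - (M ／ J).eRank` elements
of `J \ I` from an `M`-basis `J ⊇ I` of `X`.
-/

open Set

namespace Matroid

variable {α : Type*} {M : Matroid α} {k : ℕ} {I J B X : Set α} {x : α}

lemma Indep.eRank_contract_eq_encard_sdiff (hI : M.Indep I) (hB : M.IsBase B) (hIB : I ⊆ B) :
    (M ／ I).eRank = (B \ I).encard := by
  have hBI : (M ／ I).IsBase (B \ I) :=
    hI.contract_isBase_iff.2 ⟨by rwa [sdiff_union_of_subset hIB], disjoint_sdiff_left⟩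
  exact hBI.encard_eq_eRank.symm

lemma Indep.eRank_contract_eq_add (hJ : M.Indep J) (hIJ : I ⊆ J) :
    (M ／ I).eRank = (M ／ J).eRank + (J \ I).encard := by
  obtain ⟨B, hB, hJB⟩ := hJ.exists_isBase_superset
  rw [(hJ.subset hIJ).eRank_contract_eq_encard_sdiff hB (hIJ.trans hJB),
    hJ.eRank_contract_eq_encard_sdiff hB hJB,
    ← encard_union_eq (disjoint_sdiff_left.mono_right sdiff_subset),
    sdiff_union_sdiff_cancel hJB hIJ]

lemma Indep.eRank_contract_le_of_subset_closure (hI : M.Indep I) (hJ : M.Indep J)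
    (hJI : J ⊆ M.closure I) : (M ／ I).eRank ≤ (M ／ J).eRank := by
  obtain ⟨B, hB, hJB⟩ := hJ.exists_isBase_superset
  have hE : I ∪ (B \ J) ⊆ M.E := union_subset hI.subset_ground (sdiff_subset.trans hB.subset_ground)
  have hBcl : B ⊆ M.closure (I ∪ (B \ J)) := fun y hy ↦ by
    by_cases hyJ : y ∈ J
    · exact M.closure_subset_closure subset_union_left (hJI hyJ)
    · exact M.subset_closure _ hE (Or.inr ⟨hy, hyJ⟩)
  have hspan : M.Spanning (I ∪ (B \ J)) := by
    rw [spanning_iff_ground_subset_closure hE, ← hB.closure_eq]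
    exact closure_subset_closure_of_subset_closure hBcl
  obtain ⟨B', hB', hIB', hB'sub⟩ := hI.exists_isBase_subset_spanning hspan subset_union_left
  rw [hI.eRank_contract_eq_encard_sdiff hB' hIB', hJ.eRank_contract_eq_encard_sdiff hB hJB]
  exact encard_le_encard fun y hy ↦ (hB'sub hy.1).resolve_left hy.2

lemma Indep.eRank_contract_eq_insert_add_one (hI : M.Indep I) (hx : x ∈ M.E \ M.closure I) :
    (M ／ I).eRank = (M ／ insert x I).eRank + 1 := by
  have hxI : x ∉ I := fun h ↦ hx.2 (M.subset_closure I hI.subset_ground h)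
  rw [(hI.insert_indep_iff_of_notMem hxI).2 hx |>.eRank_contract_eq_add (subset_insert x I),
    insert_sdiff_eq_singleton hxI, encard_singleton]

def TruncIndep (M : Matroid α) (k : ℕ) (S : Set α) : Prop :=
  ∃ T, M.Indep T ∧ S ⊆ T ∧ (T \ S).encard = k

lemma truncIndep_iff : M.TruncIndep k I ↔ M.Indep I ∧ k ≤ (M ／ I).eRank := by
  refine ⟨fun ⟨T, hT, hIT, hTI⟩ ↦ ⟨hT.subset hIT, ?_⟩, fun ⟨hI, hk⟩ ↦ ?_⟩
  · rw [← hTI]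
    exact (hT.diff_indep_contract_of_subset hIT).encard_le_eRank
  obtain ⟨B, hB⟩ := (M ／ I).exists_isBase
  obtain ⟨D, hDB, hD⟩ := exists_subset_encard_eq (hk.trans_eq hB.encard_eq_eRank.symm)
  have hDI : (M ／ I).Indep D := hB.indep.subset hDB
  refine ⟨D ∪ I, (hI.contract_indep_iff.1 hDI).2, subset_union_right, ?_⟩
  rw [union_sdiff_right, (hI.contract_indep_iff.1 hDI).1.sdiff_eq_left, hD]

lemma TruncIndep.subset (hJ : M.TruncIndep k J) (hIJ : I ⊆ J) : M.TruncIndep k I := by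
  rw [truncIndep_iff] at hJ ⊢
  refine ⟨hJ.1.subset hIJ, hJ.2.trans ?_⟩
  rw [hJ.1.eRank_contract_eq_add hIJ]
  exact le_self_add

lemma truncIndep_insert (hI : M.Indep I) (hk : k < (M ／ I).eRank) (hx : x ∈ M.E \ M.closure I) :
    M.TruncIndep k (insert x I) := by
  have hxI : x ∉ I := fun h ↦ hx.2 (M.subset_closure I hI.subset_ground h)
  rw [hI.eRank_contract_eq_insert_add_one hx, ENat.natCast_lt_add_one_iff] at hk
  exact truncIndep_iff.2 ⟨(hI.insert_indep_iff_of_notMem hxI).2 hx, hk⟩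

lemma maximal_truncIndep_iff :
    Maximal (M.TruncIndep k) J ↔ M.Indep J ∧ (M ／ J).eRank = k := by
  refine ⟨fun hJ ↦ ?_, fun ⟨hJ, hJk⟩ ↦ ⟨truncIndep_iff.2 ⟨hJ, hJk.ge⟩, fun S hS hJS ↦ ?_⟩⟩
  · obtain ⟨hJi, hk⟩ := truncIndep_iff.1 hJ.prop
    refine ⟨hJi, hk.antisymm' (not_lt.1 fun hlt ↦ ?_)⟩
    obtain ⟨B, hB, hJB⟩ := hJi.exists_isBase_superset
    obtain ⟨y, hyB, hyJ⟩ : (B \ J).Nonempty := by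
      rw [← encard_pos, ← hJi.eRank_contract_eq_encard_sdiff hB hJB]
      exact pos_of_gt hlt
    have hyJ' : y ∈ M.E \ M.closure J :=
      (hJi.insert_indep_iff_of_notMem hyJ).1 (hB.indep.subset (insert_subset hyB hJB))
    exact hyJ (hJ.mem_of_prop_insert (truncIndep_insert hJi hlt hyJ'))
  obtain ⟨hSi, hSk⟩ := truncIndep_iff.1 hS
  have hle : (k : ℕ∞) + (S \ J).encard ≤ k + 0 := calc
    _ ≤ (M ／ S).eRank + (S \ J).encard := by gcongr
    _ = k + 0 := by rw [← hSi.eRank_contract_eq_add hJS, hJk, add_zero]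
  rw [ENat.add_le_add_iff_left (ENat.natCast_ne_top k), nonpos_iff_eq_zero, encard_eq_zero,
    sdiff_eq_empty] at hle
  exact hle

lemma truncIndep_aug (hI : M.TruncIndep k I) (hInotmax : ¬ Maximal (M.TruncIndep k) I)
    (hB : Maximal (M.TruncIndep k) B) : ∃ x ∈ B \ I, M.TruncIndep k (insert x I) := by
  obtain ⟨hIi, hIk⟩ := truncIndep_iff.1 hI
  obtain ⟨hBi, hBk⟩ := maximal_truncIndep_iff.1 hB
  have hlt : k < (M ／ I).eRank :=
    hIk.lt_of_ne fun h ↦ hInotmax (maximal_truncIndep_iff.2 ⟨hIi, h.symm⟩)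
  by_contra! hcon
  have hBI : B ⊆ M.closure I := fun y hy ↦ by
    by_cases hyI : y ∈ I
    · exact M.subset_closure I hIi.subset_ground hyI
    by_contra hycl
    exact hcon y ⟨hy, hyI⟩ (truncIndep_insert hIi hlt ⟨hBi.subset_ground hy, hycl⟩)
  exact hlt.not_ge (hBk ▸ hIi.eRank_contract_le_of_subset_closure hBi hBI)

lemma truncIndep_existsMaximalSubsetProperty (hX : X ⊆ M.E) :
    ExistsMaximalSubsetProperty (M.TruncIndep k) X := by
  intro I hI hIX
  obtain ⟨hIi, hIk⟩ := truncIndep_iff.1 hI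
  obtain ⟨J, hJX, hIJ⟩ := hIi.subset_isBasis_of_subset hIX hX
  rcases le_or_gt (k : ℕ∞) (M ／ J).eRank with hJk | hJk
  · refine ⟨J, hIJ, ⟨truncIndep_iff.2 ⟨hJX.indep, hJk⟩, hJX.subset⟩, fun S hS hJS ↦ ?_⟩
    exact (hJX.eq_of_subset_indep (truncIndep_iff.1 hS.1).1 hJS hS.2).symm.le
  -- remove from `J` just enough elements outside `I` to bring the contracted rank up to `k`
  have hkJ : (k : ℕ∞) - (M ／ J).eRank ≤ (J \ I).encard := by
    rw [tsub_le_iff_left, ← hJX.indep.eRank_contract_eq_add hIJ]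
    exact hIk
  obtain ⟨D, hDJ, hD⟩ := exists_subset_encard_eq hkJ
  have hJD : (M ／ (J \ D)).eRank = k := by
    rw [hJX.indep.eRank_contract_eq_add sdiff_subset,
      sdiff_sdiff_cancel_left (hDJ.trans sdiff_subset), hD, add_tsub_cancel_of_le hJk.le]
  have hmax := maximal_truncIndep_iff.2 ⟨hJX.indep.subset sdiff_subset, hJD⟩
  refine ⟨J \ D, subset_sdiff.2 ⟨hIJ, ?_⟩, ⟨hmax.prop, sdiff_subset.trans hJX.subset⟩,
    fun S hS hJS ↦ hmax.le_of_ge hS.1 hJS⟩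
  exact disjoint_sdiff_right.mono_right hDJ

def truncateBy (M : Matroid α) (k : ℕ) (hk : k ≤ M.eRank) : Matroid α :=
  IndepMatroid.matroid
  { E := M.E
    Indep := M.TruncIndep k
    indep_empty := truncIndep_iff.2 ⟨M.empty_indep, by rwa [contract_empty]⟩
    indep_subset := fun _ _ hJ hIJ ↦ hJ.subset hIJ
    indep_aug := fun _ _ ↦ truncIndep_aug
    indep_maximal := fun _ ↦ truncIndep_existsMaximalSubsetProperty
    subset_ground := fun _ ⟨_, hT, hIT, _⟩ ↦ hIT.trans hT.subset_ground }

end Matroid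

/-- If `M` is a matroid of rank at least `k` (some independent set has
`encard ≥ k`), then there is a matroid `M[k]` on the same ground set whose independent sets
are exactly the sets `S` admitting an `M`-independent superset `T` with `(T \ S).encard = k`. -/
theorem stmt_3 {α : Type*} (M : Matroid α) (k : ℕ)
    (hrank : ∃ I, M.Indep I ∧ (k : ℕ∞) ≤ I.encard) :
    ∃ Mk : Matroid α, Mk.E = M.E ∧
      ∀ S, Mk.Indep S ↔ ∃ T, M.Indep T ∧ S ⊆ T ∧ (T \ S).encard = (k : ℕ∞) := by
  obtain ⟨I, hI, hIk⟩ := hrank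
  exact ⟨M.truncateBy k (hIk.trans hI.encard_le_eRank), rfl, fun _ ↦ Iff.rfl⟩
end

section
/- Let M be a matroid and let N be its finitarization, i.e. a matroid with the same ground set such that a set S ⊆ E is independent in N if and only if every finite subset of S is independent in M. Suppose M is nearly finitary: for every base F of N and every base B of M with B ⊆ F, the set F \ B is finite. Suppose moreover that there exists a matroid H with the same ground set whose independent sets are exactly the sets S for which there exist a base F of N and a base B of M with B ⊆ F and S ⊆ F \ B. Then M is k-nearly finitary for some k: there exists k ∈ ℕ such that for every base F of N and every base B of M with B ⊆ F one has (F \ B).encard ≤ k. -/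
/-! The independent sets of `H` are subsets of the finite sets `F \ B`, so `H` has a finite base
and hence finite rank `k`; every `F \ B` is independent in `H`, so its size is at most `k`. -/

/-- `N` is the finitarization of `M`: same ground set, and a subset of the ground set is
independent in `N` iff all of its finite subsets are independent in `M`. -/
def IsFinitarization {α : Type*} (N M : Matroid α) : Prop :=
  N.E = M.E ∧ ∀ S ⊆ M.E, (N.Indep S ↔ ∀ J ⊆ S, J.Finite → M.Indep J)

namespace Matroid

variable {α : Type*} {H : Matroid α}

theorem rankFinite_of_forall_indep_finite (h : ∀ I, H.Indep I → I.Finite) : H.RankFinite :=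
  let ⟨_, hB⟩ := H.exists_isBase
  hB.rankFinite_of_finite (h _ hB.indep)

theorem exists_forall_indep_encard_le_of_forall_indep_finite (h : ∀ I, H.Indep I → I.Finite) :
    ∃ k : ℕ, ∀ I, H.Indep I → I.encard ≤ k := by
  have hfin : H.eRank ≠ ⊤ := H.eRank_ne_top_iff.2 (rankFinite_of_forall_indep_finite h)
  exact ⟨H.eRank.toNat, fun I hI ↦ (ENat.natCast_toNat hfin).symm ▸ hI.encard_le_eRank⟩

end Matroid

theorem stmt_4_general {α : Type*} (M N : Matroid α)
    (hnearly : ∀ F B, N.IsBase F → M.IsBase B → B ⊆ F → (F \ B).Finite)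
    (hH : ∃ H : Matroid α, H.E = M.E ∧
      ∀ S, H.Indep S ↔ ∃ F B, N.IsBase F ∧ M.IsBase B ∧ B ⊆ F ∧ S ⊆ F \ B) :
    ∃ k : ℕ, ∀ F B, N.IsBase F → M.IsBase B → B ⊆ F → (F \ B).encard ≤ (k : ℕ∞) := by
  obtain ⟨H, -, hHindep⟩ := hH
  have hHfin : ∀ I, H.Indep I → I.Finite := fun I hI ↦ by
    obtain ⟨F, B, hF, hB, hBF, hIFB⟩ := (hHindep I).1 hI
    exact (hnearly F B hF hB hBF).subset hIFB
  obtain ⟨k, hk⟩ := Matroid.exists_forall_indep_encard_le_of_forall_indep_finite hHfin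
  exact ⟨k, fun F B hF hB hBF ↦ hk _ ((hHindep _).2 ⟨F, B, hF, hB, hBF, subset_rfl⟩)⟩

/-- If `M` is nearly finitary and the independence system `M̂` (whose independent
sets are the subsets of `F \ B` for bases `B ⊆ F` of `M` and its finitarization `N`) is a
matroid, then `M` is `k`-nearly finitary for some `k`. -/
theorem stmt_4 {α : Type*} (M N : Matroid α) (hfin : IsFinitarization N M)
    (hnearly : ∀ F B, N.IsBase F → M.IsBase B → B ⊆ F → (F \ B).Finite)
    (hH : ∃ H : Matroid α, H.E = M.E ∧
      ∀ S, H.Indep S ↔ ∃ F B, N.IsBase F ∧ M.IsBase B ∧ B ⊆ F ∧ S ⊆ F \ B) :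
    ∃ k : ℕ, ∀ F B, N.IsBase F → M.IsBase B → B ⊆ F → (F \ B).encard ≤ (k : ℕ∞) :=
  stmt_4_general M N hnearly hH
end

section
/- Let N and M be matroids on the same finite ground set E such that every independent set of M is independent in N. Then the family { B_N \ B_M : B_N a base of N, B_M a base of M, B_M ⊆ B_N } coincides with the family { E \ U : U a maximal element (under set inclusion) of the family { I ∪ J : I independent in the dual N✶, J independent in M } }. (This expresses that N ⊖ M = (N✶ ∨ M)✶, where ∨ denotes matroid union and maximal unions are the bases of N✶ ∨ M.) -/
open Set

/-! If `B_M ⊆ B_N`, then `(E \ B_N) ∪ B_M` is a disjoint union of a base of `N✶` and a base of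
`M`, so it has the largest possible size `r(N✶) + r(M)` among unions of an `N✶`-independent and
an `M`-independent set, and is therefore maximal.

Conversely, write a maximal union `U` as `I ∪ (U \ I)` with `I` `N✶`-independent, `U \ I`
`M`-independent, and `I` inclusion-maximal with this property. Maximality of `I` and of `U` force
`I` to be a base of `N✶`, so `E \ I` is a base of `N` containing `J = U \ I`. If `J` were not a
base of `M`, some `J + x` would be `M`-independent, hence `N`-independent; for `x ∉ U` this
enlarges `U` directly, and for `x ∈ I` a base exchange in `N` between `E \ I` and a base
`B' ⊇ J + x` frees an element `y ∉ U` with `(E \ B') ∪ (J + x) ⊇ U + y`. -/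

theorem Set.Finite.maximal_of_forall_encard_le {α : Type*} {P : Set α → Prop} {U : Set α}
    (hU : U.Finite) (hPU : P U) (hle : ∀ X, P X → X.encard ≤ U.encard) : Maximal P U :=
  ⟨hPU, fun X hX hUX => (hU.eq_of_subset_of_encard_le hUX (hle X hX)).ge⟩

namespace Matroid

variable {α : Type*} {N M : Matroid α} {B BN BM I J U X : Set α} {x : α}

def UnionIndep (N M : Matroid α) (X : Set α) : Prop :=
  ∃ I J, N.Indep I ∧ M.Indep J ∧ X = I ∪ J

def IsIndepSplit (N M : Matroid α) (U I : Set α) : Prop :=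
  I ⊆ U ∧ N.Indep I ∧ M.Indep (U \ I)

lemma UnionIndep.encard_le (hX : UnionIndep N M X) : X.encard ≤ N.eRank + M.eRank := by
  obtain ⟨I, J, hI, hJ, rfl⟩ := hX
  exact (encard_union_le I J).trans (add_le_add hI.encard_le_eRank hJ.encard_le_eRank)

lemma maximal_unionIndep_dual_compl_union (hfin : N.E.Finite) (hBN : N.IsBase BN)
    (hBM : M.IsBase BM) (hBMN : BM ⊆ BN) : Maximal (UnionIndep N✶ M) (N.E \ BN ∪ BM) := by
  have hBN' : N✶.IsBase (N.E \ BN) := hBN.compl_isBase_dual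
  have hUfin : (N.E \ BN ∪ BM).Finite :=
    hfin.subset (union_subset sdiff_subset (hBMN.trans hBN.subset_ground))
  refine hUfin.maximal_of_forall_encard_le ⟨_, _, hBN'.indep, hBM.indep, rfl⟩ fun X hX => ?_
  rw [encard_union_eq (disjoint_sdiff_left.mono_right hBMN), hBN'.encard_eq_eRank,
    hBM.encard_eq_eRank]
  exact hX.encard_le

lemma UnionIndep.exists_maximal_isIndepSplit (hU : UnionIndep N M U) (hfin : U.Finite) :
    ∃ I, Maximal (IsIndepSplit N M U) I := by
  obtain ⟨I, J, hI, hJ, rfl⟩ := hU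
  have hsplit : IsIndepSplit N M (I ∪ J) I :=
    ⟨subset_union_left, hI, hJ.subset (by rw [union_sdiff_left]; exact sdiff_subset)⟩
  exact (hfin.finite_subsets.subset fun _ h => h.1).exists_maximal ⟨I, hsplit⟩

lemma isBase_of_maximal_isIndepSplit (hU : Maximal (UnionIndep N M) U)
    (hI : Maximal (IsIndepSplit N M U) I) : N.IsBase I := by
  obtain ⟨⟨-, hIind, hJ⟩, hImax⟩ := hI
  obtain ⟨B, hB, hIB⟩ := hIind.exists_isBase_superset
  have hUB : U ⊆ B ∪ U \ I := fun u hu =>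
    (em (u ∈ I)).elim (fun h => Or.inl (hIB h)) fun h => Or.inr ⟨hu, h⟩
  have hBU : B ⊆ U := subset_union_left.trans (hU.2 ⟨B, U \ I, hB.indep, hJ, rfl⟩ hUB)
  have hsplit : IsIndepSplit N M U B :=
    ⟨hBU, hB.indep, hJ.subset (sdiff_subset_sdiff_right hIB)⟩
  rwa [hIB.antisymm (hImax hsplit hIB)]

lemma IsBase.exists_isBase_insert_not_superset (hB : N.IsBase B) (hJB : J ⊆ B) (hxB : x ∉ B)
    (hJx : N.Indep (insert x J)) :
    ∃ B', N.IsBase B' ∧ insert x J ⊆ B' ∧ B' ⊆ insert x B ∧ ¬ B ⊆ B' := by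
  obtain ⟨B', hB', hJxB', hB'sub⟩ := hJx.exists_isBase_subset_union_isBase hB
  refine ⟨B', hB', hJxB', hB'sub.trans ?_, fun hBB' => hxB ?_⟩
  · rw [insert_union]
    exact insert_subset_insert (union_subset hJB subset_rfl)
  · rw [hB.eq_of_subset_isBase hB' hBB']
    exact hJxB' (mem_insert x J)

lemma isBase_diff_of_maximal_unionIndep (hsub : ∀ I, M.Indep I → N.Indep I)
    (hU : Maximal (UnionIndep N✶ M) U) (hI : N✶.IsBase I) (hJ : M.Indep (U \ I)) :
    M.IsBase (U \ I) := by
  by_contra hJbase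
  obtain ⟨BM, hBM⟩ := M.exists_isBase
  obtain ⟨x, hxJ, hxind⟩ := hJ.exists_insert_of_not_isBase hJbase hBM
  by_cases hxI : x ∈ I
  · have hJN : U \ I ⊆ N.E \ I := fun u hu => ⟨(hsub _ hJ).subset_ground hu, hu.2⟩
    obtain ⟨B', hB', hxJB', hB'sub, hnot⟩ :=
      hI.compl_isBase_of_dual.exists_isBase_insert_not_superset hJN (fun h => h.2 hxI)
        (hsub _ hxind)
    obtain ⟨y, hy, hyB'⟩ := not_subset.1 hnot
    have hyU : y ∉ U := fun hyU => hyB' (hxJB' (mem_insert_of_mem x ⟨hyU, hy.2⟩))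
    have hUX : U ⊆ N.E \ B' ∪ insert x (U \ I) := by
      intro u hu
      by_cases huI : u ∈ I
      · by_cases hux : u = x
        · exact Or.inr (hux ▸ mem_insert u _)
        · refine Or.inl ⟨hI.subset_ground huI, fun huB' => ?_⟩
          exact (hB'sub huB').elim hux fun h => h.2 huI
      · exact Or.inr (mem_insert_of_mem x ⟨hu, huI⟩)
    have hX : UnionIndep N✶ M (N.E \ B' ∪ insert x (U \ I)) :=
      ⟨_, _, hB'.compl_isBase_dual.indep, hxind, rfl⟩
    exact hyU (hU.2 hX hUX (Or.inl ⟨hy.1, hyB'⟩))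
  · have hxU : x ∉ U := fun hxU => hxJ.2 ⟨hxU, hxI⟩
    have hUX : U ⊆ I ∪ insert x (U \ I) := fun u hu =>
      (em (u ∈ I)).elim Or.inl fun h => Or.inr (mem_insert_of_mem x ⟨hu, h⟩)
    exact hxU (hU.2 ⟨_, _, hI.indep, hxind, rfl⟩ hUX (Or.inr (mem_insert x _)))

lemma exists_isBase_diff_eq_of_maximal_unionIndep (hsub : ∀ I, M.Indep I → N.Indep I)
    (hfin : N.E.Finite) (hU : Maximal (UnionIndep N✶ M) U) :
    ∃ BN BM, N.IsBase BN ∧ M.IsBase BM ∧ BM ⊆ BN ∧ N.E \ U = BN \ BM := by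
  have hUE : U ⊆ N.E := by
    obtain ⟨I, J, hI, hJ, rfl⟩ := hU.1
    exact union_subset hI.subset_ground (hsub _ hJ).subset_ground
  obtain ⟨I, hI⟩ := hU.1.exists_maximal_isIndepSplit (hfin.subset hUE)
  have hIbase := isBase_of_maximal_isIndepSplit hU hI
  have hJbase := isBase_diff_of_maximal_unionIndep hsub hU hIbase hI.1.2.2
  refine ⟨N.E \ I, U \ I, hIbase.compl_isBase_of_dual, hJbase,
    sdiff_subset_sdiff_left hUE, ?_⟩
  rw [sdiff_sdiff_sdiff_cancel_right hI.1.1]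

end Matroid

theorem stmt_5_general {α : Type*} (N M : Matroid α) (hfin : N.E.Finite)
    (hsub : ∀ I, M.Indep I → N.Indep I) :
    {D | ∃ BN BM, N.IsBase BN ∧ M.IsBase BM ∧ BM ⊆ BN ∧ D = BN \ BM} =
      {D | ∃ U, Maximal (fun X => ∃ I J, N✶.Indep I ∧ M.Indep J ∧ X = I ∪ J) U ∧
        D = N.E \ U} := by
  ext D
  constructor
  · rintro ⟨BN, BM, hBN, hBM, hBMN, rfl⟩
    refine ⟨_, Matroid.maximal_unionIndep_dual_compl_union hfin hBN hBM hBMN, ?_⟩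
    rw [← sdiff_sdiff, sdiff_sdiff_cancel_left hBN.subset_ground]
  · rintro ⟨U, hU, rfl⟩
    exact Matroid.exists_isBase_diff_eq_of_maximal_unionIndep hsub hfin hU

/-- For matroids `N`, `M` on a common finite ground set with every `M`-independent
set `N`-independent, the family `{ B_N \ B_M : B_N base of N, B_M base of M, B_M ⊆ B_N }`
equals the family of complements (in the ground set) of the maximal unions of an
`N✶`-independent set and an `M`-independent set; i.e. `N ⊖ M = (N✶ ∨ M)✶`. -/
theorem stmt_5 {α : Type*} (N M : Matroid α) (hE : M.E = N.E) (hfin : N.E.Finite)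
    (hsub : ∀ I, M.Indep I → N.Indep I) :
    {D | ∃ BN BM, N.IsBase BN ∧ M.IsBase BM ∧ BM ⊆ BN ∧ D = BN \ BM} =
      {D | ∃ U, Maximal (fun X => ∃ I J, N✶.Indep I ∧ M.Indep J ∧ X = I ∪ J) U ∧
        D = N.E \ U} :=
  stmt_5_general N M hfin hsub
end

section
/- Let M be a matroid, let N be the finitarization of M (a matroid on the same ground set whose independent sets are exactly those all of whose finite subsets are independent in M), let N' be the finitarization of the dual M✶, and let P be the finitarization of the dual N✶. Suppose M is nearly finitary (for every base F of N and base B of M with B ⊆ F, F \ B is finite) and M is nearly cofinitary (for every base F of N' and base B of M✶ with B ⊆ F, F \ B is finite). Then N✶ = (M^fin)✶ is nearly finitary: for every base F of P and every base B of N✶ with B ⊆ F, the set F \ B is finite. -/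
open Set Matroid

lemma Matroid.IsBase.diff_finite_of_subset {α : Type*} {M : Matroid α} {B B' F : Set α}
    (hB : M.IsBase B) (hB' : M.IsBase B') (hBF : B ⊆ F) (hF : (F \ B').Finite) :
    (F \ B).Finite := by
  have hB'B : (B' \ B).Finite := (hB.sdiff_finite_comm hB').mp (hF.subset (sdiff_subset_sdiff_left hBF))
  refine (hF.union hB'B).subset fun x ⟨hxF, hxB⟩ => ?_
  by_cases hxB' : x ∈ B'
  · exact Or.inr ⟨hxB', hxB⟩
  · exact Or.inl ⟨hxF, hxB'⟩

namespace IsFinitarization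

variable {α : Type*} {N M : Matroid α}

lemma indep_of_indep (h : IsFinitarization N M) {I : Set α} (hI : M.Indep I) : N.Indep I :=
  (h.2 I hI.subset_ground).mpr fun _ hJ _ => hI.subset hJ

lemma indep_mono {P Q N' : Matroid α} (hP : IsFinitarization P N) (hQ : IsFinitarization Q N')
    (hE : N.E = N'.E) (hNN' : ∀ I, N.Indep I → N'.Indep I) {F : Set α} (hF : P.Indep F) :
    Q.Indep F := by
  have hFE : F ⊆ N.E := hP.1 ▸ hF.subset_ground
  exact (hQ.2 F (hE ▸ hFE)).mpr fun J hJ hJfin => hNN' J ((hP.2 F hFE).mp hF J hJ hJfin)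

lemma insert_indep_of_notMem_closure (h : IsFinitarization N M) {F : Set α} {e : α}
    (hF : N.Indep F) (he : e ∈ M.E) (heF : e ∉ M.closure F) : N.Indep (insert e F) := by
  have hFE : F ⊆ M.E := h.1 ▸ hF.subset_ground
  refine (h.2 _ (insert_subset he hFE)).mpr fun K hK hKfin => ?_
  have hKe : K \ {e} ⊆ F := by simpa [sdiff_subset_iff] using hK
  have hKe_indep : M.Indep (K \ {e}) := (h.2 F hFE).mp hF _ hKe hKfin.sdiff
  have heK : e ∉ M.closure (K \ {e}) := fun he' => heF (M.closure_subset_closure hKe he')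
  refine ((hKe_indep.insert_indep_iff).mpr (Or.inl ⟨he, heK⟩)).subset fun x hx => ?_
  by_cases hxe : x = e
  · exact hxe ▸ mem_insert _ _
  · exact mem_insert_of_mem _ ⟨hx, hxe⟩

lemma exists_isBase_subset (h : IsFinitarization N M) {F : Set α} (hF : N.IsBase F) :
    ∃ B, M.IsBase B ∧ B ⊆ F := by
  obtain ⟨J, hJ⟩ := M.exists_isBasis F (h.1 ▸ hF.subset_ground)
  refine ⟨J, hJ.indep.isBase_of_ground_subset_closure fun e he => ?_, hJ.subset⟩
  by_contra heJ
  rw [hJ.closure_eq_closure] at heJ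
  have hins := hF.eq_of_subset_indep (h.insert_indep_of_notMem_closure hF.indep he heJ)
    (subset_insert e F)
  exact heJ (M.subset_closure F (h.1 ▸ hF.subset_ground) (hins ▸ mem_insert e F))

lemma indep_dual_of_indep_dual (h : IsFinitarization N M) {X : Set α} (hX : N✶.Indep X) :
    M✶.Indep X := by
  rw [dual_indep_iff_exists'] at hX ⊢
  obtain ⟨hXE, F, hF, hXF⟩ := hX
  obtain ⟨B, hB, hBF⟩ := h.exists_isBase_subset hF
  exact ⟨h.1 ▸ hXE, B, hB, hXF.mono_right hBF⟩

lemma exists_isBase_diff_finite (h : IsFinitarization N M)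
    (hnearly : ∀ F B, N.IsBase F → M.IsBase B → B ⊆ F → (F \ B).Finite)
    {I : Set α} (hI : N.Indep I) : ∃ B, M.IsBase B ∧ (I \ B).Finite := by
  obtain ⟨F, hF, hIF⟩ := hI.exists_isBase_superset
  obtain ⟨B, hB, hBF⟩ := h.exists_isBase_subset hF
  exact ⟨B, hB, (hnearly F B hF hB hBF).subset (sdiff_subset_sdiff_left hIF)⟩

end IsFinitarization

/-- If `M` is nearly finitary and nearly cofinitary, then `(M^fin)✶ = N✶` is
nearly finitary, where `N` is the finitarization of `M`, `N'` is the finitarization of `M✶`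
and `P` is the finitarization of `N✶`. -/
theorem stmt_6 {α : Type*} (M N N' P : Matroid α)
    (hN : IsFinitarization N M) (hN' : IsFinitarization N' M✶)
    (hP : IsFinitarization P N✶)
    (hnearly : ∀ F B, N.IsBase F → M.IsBase B → B ⊆ F → (F \ B).Finite)
    (hconearly : ∀ F B, N'.IsBase F → M✶.IsBase B → B ⊆ F → (F \ B).Finite) :
    ∀ F B, P.IsBase F → N✶.IsBase B → B ⊆ F → (F \ B).Finite := by
  intro F B hF hB hBF
  have hFN' : N'.Indep F :=
    hP.indep_mono hN' (by simp [hN.1]) (fun _ => hN.indep_dual_of_indep_dual) hF.indep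
  obtain ⟨B₂, hB₂, hFB₂⟩ := hN'.exists_isBase_diff_finite hconearly hFN'
  have hC : M.IsBase (M.E \ B₂) := hB₂.compl_isBase_of_dual
  obtain ⟨F₃, hF₃, hCF₃⟩ := (hN.indep_of_indep hC.indep).exists_isBase_superset
  have hF₃C : (F₃ \ (M.E \ B₂)).Finite := hnearly F₃ _ hF₃ hC hCF₃
  refine hB.diff_finite_of_subset hF₃.compl_isBase_dual hBF
    ((hFB₂.union hF₃C).subset fun x ⟨hxF, hxF₃⟩ => ?_)
  have hxE : x ∈ N.E := by simpa using hP.1 ▸ hF.subset_ground hxF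
  have hxF₃ : x ∈ F₃ := by simpa [hxE] using hxF₃
  by_cases hxB₂ : x ∈ B₂
  · exact Or.inr ⟨hxF₃, fun hx => hx.2 hxB₂⟩
  · exact Or.inl ⟨hxF, hxB₂⟩
end

section
/- Let M be a matroid with finitarization N, and suppose M is k-nearly finitary for some k ∈ ℕ: for every base F of N and every base B of M with B ⊆ F, (F \ B).encard ≤ k. Define S(M) := { F✶ ∪ B : F✶ a base of N✶, B a base of M, F✶ ∩ B = ∅ }. Then S(M) has a minimal element with respect to set inclusion: there exists X ∈ S(M) such that every Y ∈ S(M) with Y ⊆ X equals X. -/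
/-!
Writing `E` for the common ground set, a member `F✶ ∪ B` of `S(M)` is the complement
`E \ (F \ B)` of the gap between the base `F = E \ F✶` of `N` and the base `B ⊆ F` of `M`.
So a minimal member of `S(M)` comes from an inclusion-maximal gap `F \ B`, and such a gap
exists because all gaps are finite sets of size at most `k`.
-/

section

open Set Matroid

variable {α : Type*}

theorem IsFinitarization.indep {M N : Matroid α} (h : IsFinitarization N M) {I : Set α}
    (hI : M.Indep I) : N.Indep I :=
  (h.2 I hI.subset_ground).2 fun _ hJ _ ↦ hI.subset hJ

theorem Set.exists_maximal_of_encard_le {𝒟 : Set (Set α)} (hne : 𝒟.Nonempty) {k : ℕ}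
    (hbdd : ∀ D ∈ 𝒟, D.encard ≤ k) : ∃ D, Maximal (· ∈ 𝒟) D := by
  have hfin : (ncard '' 𝒟).Finite := (finite_Iic k).subset <| by
    rintro _ ⟨D, hD, rfl⟩
    exact (encard_le_coe_iff_finite_ncard_le.1 (hbdd D hD)).2
  obtain ⟨D, hD, hmax⟩ := Finite.exists_maximalFor' ncard 𝒟 hfin hne
  refine ⟨D, hD, fun D' hD' hDD' ↦ (eq_of_subset_of_ncard_le hDD' ?_ ?_).ge⟩
  · exact hmax hD' (ncard_le_ncard hDD' (finite_of_encard_le_coe (hbdd D' hD')))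
  · exact finite_of_encard_le_coe (hbdd D' hD')

theorem Matroid.exists_dual_isBase_union_iff {M N : Matroid α} (hE : N.E = M.E) {Y : Set α} :
    (∃ Fs B, N✶.IsBase Fs ∧ M.IsBase B ∧ Fs ∩ B = ∅ ∧ Y = Fs ∪ B) ↔
      ∃ F B, N.IsBase F ∧ M.IsBase B ∧ B ⊆ F ∧ Y = N.E \ (F \ B) := by
  constructor
  · rintro ⟨Fs, B, hFs, hB, hdisj, rfl⟩
    obtain ⟨hF, hFsE⟩ := dual_isBase_iff'.1 hFs
    have hBF : B ⊆ N.E \ Fs := subset_sdiff.2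
      ⟨hE ▸ hB.subset_ground, disjoint_iff_inter_eq_empty.2 hdisj |>.symm⟩
    refine ⟨N.E \ Fs, B, hF, hB, hBF, ?_⟩
    rw [sdiff_sdiff_eq_sdiff_union (hBF.trans sdiff_subset), sdiff_sdiff_cancel_left hFsE]
  · rintro ⟨F, B, hF, hB, hBF, rfl⟩
    refine ⟨N.E \ F, B, hF.compl_isBase_dual, hB, ?_,
      sdiff_sdiff_eq_sdiff_union (hBF.trans hF.subset_ground)⟩
    exact disjoint_iff_inter_eq_empty.1 (disjoint_sdiff_left.mono_right hBF)

end

/-- If `M` is `k`-nearly finitary (with finitarization `N`), then the family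
`S(M) = { F✶ ∪ B : F✶ base of N✶, B base of M, F✶ ∩ B = ∅ }` has a minimal element with
respect to set inclusion. -/
theorem stmt_7 {α : Type*} (M N : Matroid α) (hfin : IsFinitarization N M) (k : ℕ)
    (hk : ∀ F B, N.IsBase F → M.IsBase B → B ⊆ F → (F \ B).encard ≤ (k : ℕ∞)) :
    ∃ X ∈ {X | ∃ Fs B, N✶.IsBase Fs ∧ M.IsBase B ∧ Fs ∩ B = ∅ ∧ X = Fs ∪ B},
      ∀ Y ∈ {X | ∃ Fs B, N✶.IsBase Fs ∧ M.IsBase B ∧ Fs ∩ B = ∅ ∧ X = Fs ∪ B},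
        Y ⊆ X → Y = X := by
  simp only [Set.mem_ofPred_eq, Matroid.exists_dual_isBase_union_iff hfin.1]
  set gaps := {D | ∃ F B, N.IsBase F ∧ M.IsBase B ∧ B ⊆ F ∧ D = F \ B}
  have hne : gaps.Nonempty := by
    obtain ⟨B, hB⟩ := M.exists_isBase
    obtain ⟨F, hF, hBF⟩ := (hfin.indep hB.indep).exists_isBase_superset
    exact ⟨_, F, B, hF, hB, hBF, rfl⟩
  obtain ⟨D, ⟨F, B, hF, hB, hBF, rfl⟩, hmax⟩ :=
    Set.exists_maximal_of_encard_le hne <| by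
      rintro _ ⟨F, B, hF, hB, hBF, rfl⟩
      exact hk F B hF hB hBF
  refine ⟨_, ⟨F, B, hF, hB, hBF, rfl⟩, ?_⟩
  rintro _ ⟨F', B', hF', hB', hBF', rfl⟩ hsub
  have hgap : F \ B ⊆ F' \ B' := (Set.sdiff_subset_sdiff_iff_subset
    (Set.sdiff_subset.trans hF'.subset_ground) (Set.sdiff_subset.trans hF.subset_ground)).1 hsub
  rw [hmax ⟨F', B', hF', hB', hBF', rfl⟩ hgap |>.antisymm hgap]
end

section
/- Fix k ∈ ℕ. Let M be a matroid with finitarization N, and suppose M is nearly finitary (for every base F of N and base B of M with B ⊆ F, F \ B is finite) but not n-nearly finitary for any n ∈ ℕ (for every n there exist a base F of N and a base B of M with B ⊆ F and n < (F \ B).encard). Let Mk be a matroid with the same ground set whose independent sets are exactly the sets S for which there exists T with M.Indep T, S ⊆ T and (T \ S).encard = k (i.e. Mk = M[k]; note M[k]^fin = M^fin = N). Then Mk is nearly finitary but not n-nearly finitary for any n: for every base F of N and base B of Mk with B ⊆ F, F \ B is finite, and for every n ∈ ℕ there exist a base F of N and a base B of Mk with B ⊆ F and n < (F \ B).encard.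 -/
/-!
Every base `B` of `M[k]` lies in a base `T` of `M` with `|T \ B| = k`, so finiteness of the
gaps `F \ T` for `M` transfers to `M[k]` at the cost of `k` elements (and a change of base of the
finitarization, which only moves finitely many elements). Conversely, deleting any `k` elements
from a base of `M` yields a base of `M[k]`, which only enlarges the gap to a base of `M^fin`.
-/

open Set

namespace Matroid

variable {α : Type*}

/-- `Mk` is the matroid `M[k]`. -/
def IsTruncationBy (Mk M : Matroid α) (k : ℕ) : Prop :=
  ∀ S, Mk.Indep S ↔ ∃ T, M.Indep T ∧ S ⊆ T ∧ (T \ S).encard = k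

lemma Indep.encard_sdiff_le_encard_sdiff_of_isBase {M : Matroid α} {I B : Set α}
    (hI : M.Indep I) (hB : M.IsBase B) : (I \ B).encard ≤ (B \ I).encard := by
  obtain ⟨B', hB', hIB'⟩ := hI.exists_isBase_superset
  calc (I \ B).encard ≤ (B' \ B).encard := encard_le_encard (sdiff_subset_sdiff_left hIB')
    _ = (B \ B').encard := hB'.encard_sdiff_comm hB
    _ ≤ (B \ I).encard := encard_le_encard (sdiff_subset_sdiff_right hIB')

lemma IsBase.finite_sdiff_of_finite_sdiff {N : Matroid α} {F F' B : Set α} (hF : N.IsBase F)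
    (hF' : N.IsBase F') (hBF : B ⊆ F) (hF'B : (F' \ B).Finite) : (F \ B).Finite := by
  have hF'F : (F' \ F).Finite := hF'B.subset (sdiff_subset_sdiff_right hBF)
  exact (((hF.sdiff_finite_comm hF').2 hF'F).union hF'B).subset (sdiff_triangle F F' B)

namespace IsTruncationBy

variable {M Mk : Matroid α} {k : ℕ}

lemma k_le_eRank (h : Mk.IsTruncationBy M k) : (k : ℕ∞) ≤ M.eRank := by
  obtain ⟨T, hT, -, hTk⟩ := (h ∅).1 Mk.empty_indep
  rw [sdiff_empty] at hTk
  exact hTk ▸ hT.encard_le_eRank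

lemma exists_isBase_superset (h : Mk.IsTruncationBy M k) {B : Set α} (hB : Mk.IsBase B) :
    ∃ T, M.IsBase T ∧ B ⊆ T ∧ (T \ B).encard = k := by
  obtain ⟨T, hT, hBT, hTB⟩ := (h B).1 hB.indep
  refine ⟨T, by_contra fun hTnb => ?_, hBT, hTB⟩
  obtain ⟨B₀, hB₀⟩ := M.exists_isBase
  obtain ⟨e, he, heT⟩ := hT.exists_insert_of_not_isBase hTnb hB₀
  have hins : Mk.Indep (insert e B) := (h _).2 ⟨insert e T, heT, insert_subset_insert hBT, by
    rwa [insert_sdiff_of_mem _ (mem_insert e B), sdiff_insert_of_notMem he.2]⟩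
  exact he.2 (hBT ((hB.eq_of_subset_indep hins (subset_insert e B)) ▸ mem_insert e B))

lemma isBase_sdiff (h : Mk.IsTruncationBy M k) {B D : Set α} (hB : M.IsBase B) (hDB : D ⊆ B)
    (hD : D.encard = k) : Mk.IsBase (B \ D) := by
  have hind : Mk.Indep (B \ D) :=
    (h _).2 ⟨B, hB.indep, sdiff_subset, by rwa [sdiff_sdiff_right_self, inter_eq_right.2 hDB]⟩
  refine isBase_iff_maximal_indep.2 ⟨hind, fun S hS hBS => ?_⟩
  obtain ⟨T, hT, hST, hTS⟩ := (h S).1 hS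
  -- `T` overshoots `B \ D` by at most `|D| = k`, but already overshoots `S` by exactly `k`.
  have hBT : B \ T ⊆ D \ T := fun x ⟨hxB, hxT⟩ =>
    ⟨by_contra fun hxD => hxT (hST (hBS ⟨hxB, hxD⟩)), hxT⟩
  have hle : (T \ (B \ D)).encard ≤ k := calc
    (T \ (B \ D)).encard ≤ (T \ B).encard + (T ∩ D).encard := by
      rw [sdiff_sdiff_right]; exact encard_union_le _ _
    _ ≤ (D \ T).encard + (D ∩ T).encard := by
      rw [inter_comm]
      gcongr ?_ + _
      exact (hT.encard_sdiff_le_encard_sdiff_of_isBase hB).trans (encard_le_encard hBT)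
    _ = k := by rw [encard_sdiff_add_encard_inter, hD]
  have heq : (T \ (B \ D)).encard = k + (S \ (B \ D)).encard := by
    rw [← hTS, ← encard_union_eq (disjoint_sdiff_left.mono_right sdiff_subset),
      sdiff_union_sdiff_cancel hST hBS]
  rw [heq] at hle
  have hzero : (S \ (B \ D)).encard = 0 :=
    nonpos_iff_eq_zero.1 ((ENat.add_le_add_iff_left (ENat.natCast_ne_top k)).1 (by rwa [add_zero]))
  exact sdiff_eq_empty.1 (encard_eq_zero.1 hzero)

end IsTruncationBy

end Matroid

lemma IsFinitarization.indep_of_indep_s8 {α : Type*} {N M : Matroid α} {I : Set α}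
    (hfin : IsFinitarization N M) (hI : M.Indep I) : N.Indep I :=
  (hfin.2 I hI.subset_ground).2 fun _ hJ _ => hI.subset hJ

open Matroid in
theorem stmt_8_general {α : Type*} (k : ℕ) (M N Mk : Matroid α) (hfin : IsFinitarization N M)
    (hnearly : ∀ F B, N.IsBase F → M.IsBase B → B ⊆ F → (F \ B).Finite)
    (hnotk : ∀ n : ℕ, ∃ F B, N.IsBase F ∧ M.IsBase B ∧ B ⊆ F ∧ (n : ℕ∞) < (F \ B).encard)
    (hMk : ∀ S, Mk.Indep S ↔ ∃ T, M.Indep T ∧ S ⊆ T ∧ (T \ S).encard = (k : ℕ∞)) :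
    (∀ F B, N.IsBase F → Mk.IsBase B → B ⊆ F → (F \ B).Finite) ∧
      (∀ n : ℕ, ∃ F B, N.IsBase F ∧ Mk.IsBase B ∧ B ⊆ F ∧ (n : ℕ∞) < (F \ B).encard) := by
  have hMk : Mk.IsTruncationBy M k := hMk
  refine ⟨fun F B hF hB hBF => ?_, fun n => ?_⟩
  · obtain ⟨T, hT, hBT, hTB⟩ := hMk.exists_isBase_superset hB
    obtain ⟨F', hF', hTF'⟩ := (hfin.indep_of_indep_s8 hT.indep).exists_isBase_superset
    refine hF.finite_sdiff_of_finite_sdiff hF' hBF ?_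
    exact ((hnearly F' T hF' hT hTF').union (finite_of_encard_eq_coe hTB)).subset
      (sdiff_triangle F' T B)
  · obtain ⟨F, B, hF, hB, hBF, hn⟩ := hnotk n
    obtain ⟨D, hDB, hD⟩ :=
      exists_subset_encard_eq (hMk.k_le_eRank.trans_eq hB.encard_eq_eRank.symm)
    exact ⟨F, B \ D, hF, hMk.isBase_sdiff hB hDB hD, sdiff_subset.trans hBF,
      hn.trans_le (encard_le_encard (sdiff_subset_sdiff_right sdiff_subset))⟩

/-- If `M` is nearly finitary but not `n`-nearly finitary for any `n`, then so is
`M[k]`, the matroid whose independent sets are the `S` with an `M`-independent superset `T`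
satisfying `(T \ S).encard = k` (note `M[k]` has the same finitarization `N` as `M`). -/
theorem stmt_8 {α : Type*} (k : ℕ) (M N Mk : Matroid α) (hfin : IsFinitarization N M)
    (hnearly : ∀ F B, N.IsBase F → M.IsBase B → B ⊆ F → (F \ B).Finite)
    (hnotk : ∀ n : ℕ, ∃ F B, N.IsBase F ∧ M.IsBase B ∧ B ⊆ F ∧ (n : ℕ∞) < (F \ B).encard)
    (hMkE : Mk.E = M.E)
    (hMk : ∀ S, Mk.Indep S ↔ ∃ T, M.Indep T ∧ S ⊆ T ∧ (T \ S).encard = (k : ℕ∞)) :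
    (∀ F B, N.IsBase F → Mk.IsBase B → B ⊆ F → (F \ B).Finite) ∧
      (∀ n : ℕ, ∃ F B, N.IsBase F ∧ Mk.IsBase B ∧ B ⊆ F ∧ (n : ℕ∞) < (F \ B).encard) :=
  stmt_8_general k M N Mk hfin hnearly hnotk hMk
end

section
/- Let M be a matroid with finitarization N that is nearly finitary but not n-nearly finitary for any n ∈ ℕ, and suppose T ⊆ E(M) is a set of coloops of M (every e ∈ T is a coloop, i.e. is contained in every base of M). Let P be the finitarization of the contraction M ／ T (Mathlib's Matroid.contract). Then M ／ T is nearly finitary but not n-nearly finitary for any n: for every base F of P and base B of M ／ T with B ⊆ F, F \ B is finite, and for every n ∈ ℕ there exist a base F of P and a base B of M ／ T with B ⊆ F and n < (F \ B).encard. -/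
/-- The deletion `M ＼ X` of a set `X` from a matroid `M`: the restriction of `M`
to `M.E \ X`. -/
def Matroid.del {α : Type*} (M : Matroid α) (X : Set α) : Matroid α := M.restrict (M.E \ X)

/-- The contraction `M ／ X`, defined by `M ／ X = (M✶ ＼ X)✶`. -/
def Matroid.con {α : Type*} (M : Matroid α) (X : Set α) : Matroid α := (M✶.del X)✶

/-!
Coloops of `M` remain coloops of its finitarization `N`, and contracting a set `T` of coloops
is the same as deleting it; hence the finitarization of `M ／ T` is `N ／ T`. Bases of
`M ／ T` and `N ／ T` are exactly the bases of `M` and `N` with `T` removed, and removing `T`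
from both members of a pair `B ⊆ F` does not change `F \ B`.
-/

open Set Matroid

lemma Matroid.con_eq_contract {α : Type*} (M : Matroid α) (X : Set α) : M.con X = M ／ X := rfl

namespace IsFinitarization

variable {α : Type*} {M N P : Matroid α} {S T : Set α}

lemma indep_iff (hN : IsFinitarization N M) :
    N.Indep S ↔ S ⊆ M.E ∧ ∀ J ⊆ S, J.Finite → M.Indep J := by
  refine ⟨fun h ↦ ?_, fun ⟨hSE, hS⟩ ↦ (hN.2 S hSE).2 hS⟩
  have hSE : S ⊆ M.E := hN.1 ▸ h.subset_ground
  exact ⟨hSE, (hN.2 S hSE).1 h⟩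

lemma eq (hP : IsFinitarization P M) (hN : IsFinitarization N M) : P = N :=
  ext_indep (hP.1.trans hN.1.symm) fun _ _ ↦ by rw [hP.indep_iff, hN.indep_iff]

/-- A base of `N` missing a coloop `e` of `M` could be extended by `e`, since each finite
subset of the extension is a finite independent set of `M` with the coloop `e` added. -/
lemma coloops_subset (hN : IsFinitarization N M) : M.coloops ⊆ N.coloops := by
  intro e he
  refine isColoop_iff_forall_mem_isBase.2 fun F hF ↦ by_contra fun heF ↦ heF ?_
  have hFi : ∀ J ⊆ F, J.Finite → M.Indep J := (hN.indep_iff.1 hF.indep).2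
  have hins : N.Indep (insert e F) := by
    refine hN.indep_iff.2 ⟨insert_subset (coloops_subset_ground M he)
      (hN.1 ▸ hF.subset_ground), fun J hJ hJfin ↦ ?_⟩
    refine (IsColoop.insert_indep_of_indep he (hFi (J \ {e}) ?_ hJfin.sdiff)).subset
      (subset_insert_sdiff_singleton e J)
    rwa [sdiff_singleton_subset_iff]
  rw [hF.eq_of_subset_indep hins (subset_insert e F)]
  exact mem_insert e F

lemma contract (hN : IsFinitarization N M) (hT : T ⊆ M.coloops) :
    IsFinitarization (N ／ T) (M ／ T) := by
  refine ⟨by rw [contract_ground, contract_ground, hN.1], fun S hS ↦ ?_⟩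
  rw [contract_ground, subset_sdiff] at hS
  simp_rw [contract_eq_delete_of_subset_coloops hT,
    contract_eq_delete_of_subset_coloops (hT.trans hN.coloops_subset), delete_indep_iff,
    hN.indep_iff]
  exact ⟨fun h J hJ hJfin ↦ ⟨h.1.2 J hJ hJfin, h.2.mono_left hJ⟩,
    fun h ↦ ⟨⟨hS.1, fun J hJ hJfin ↦ (h J hJ hJfin).1⟩, hS.2⟩⟩

end IsFinitarization

namespace Matroid

variable {α : Type*} {M : Matroid α} {B T : Set α}

lemma isBase_contract_iff_of_subset_coloops (hT : T ⊆ M.coloops) :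
    (M ／ T).IsBase B ↔ M.IsBase (B ∪ T) ∧ Disjoint B T :=
  (M.coloops_indep.subset hT).contract_isBase_iff

lemma IsBase.sdiff_isBase_contract (hB : M.IsBase B) (hT : T ⊆ M.coloops) :
    (M ／ T).IsBase (B \ T) := by
  rw [isBase_contract_iff_of_subset_coloops hT, sdiff_union_self,
    union_eq_left.2 (hT.trans hB.coloops_subset)]
  exact ⟨hB, disjoint_sdiff_left⟩

end Matroid

theorem stmt_12_general {α : Type*} (M N : Matroid α) (hfin : IsFinitarization N M)
    (hnearly : ∀ F B, N.IsBase F → M.IsBase B → B ⊆ F → (F \ B).Finite)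
    (hnotk : ∀ n : ℕ, ∃ F B, N.IsBase F ∧ M.IsBase B ∧ B ⊆ F ∧ (n : ℕ∞) < (F \ B).encard)
    (T : Set α) (hcoloop : ∀ e ∈ T, ∀ B, M.IsBase B → e ∈ B)
    (P : Matroid α) (hP : IsFinitarization P (M.con T)) :
    (∀ F B, P.IsBase F → (M.con T).IsBase B → B ⊆ F → (F \ B).Finite) ∧
      (∀ n : ℕ, ∃ F B, P.IsBase F ∧ (M.con T).IsBase B ∧ B ⊆ F ∧ (n : ℕ∞) < (F \ B).encard) := by
  have hTM : T ⊆ M.coloops := fun e he ↦ isColoop_iff_forall_mem_isBase.2 (hcoloop e he)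
  have hTN : T ⊆ N.coloops := hTM.trans hfin.coloops_subset
  rw [con_eq_contract] at hP ⊢
  obtain rfl : P = N ／ T := hP.eq (hfin.contract hTM)
  refine ⟨fun F B hF hB hBF ↦ ?_, fun n ↦ ?_⟩
  · rw [isBase_contract_iff_of_subset_coloops hTN] at hF
    rw [isBase_contract_iff_of_subset_coloops hTM] at hB
    refine (hnearly _ _ hF.1 hB.1 (union_subset_union_left T hBF)).subset ?_
    nth_rw 1 [← hF.2.sdiff_eq_left]
    rw [sdiff_sdiff, union_comm]
    exact sdiff_subset_sdiff_left subset_union_left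
  · obtain ⟨F, B, hF, hB, hBF, hn⟩ := hnotk n
    refine ⟨F \ T, B \ T, hF.sdiff_isBase_contract hTN, hB.sdiff_isBase_contract hTM,
      sdiff_subset_sdiff_left hBF, ?_⟩
    rwa [sdiff_sdiff_sdiff_cancel_right (hTM.trans hB.coloops_subset)]

/-- If `M` is nearly finitary but not `n`-nearly finitary for any `n`, and
`T ⊆ M.E` is a set of coloops of `M` (elements contained in every base), then the contraction
`M ／ T` is nearly finitary but not `n`-nearly finitary for any `n`. -/
theorem stmt_12 {α : Type*} (M N : Matroid α) (hfin : IsFinitarization N M)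
    (hnearly : ∀ F B, N.IsBase F → M.IsBase B → B ⊆ F → (F \ B).Finite)
    (hnotk : ∀ n : ℕ, ∃ F B, N.IsBase F ∧ M.IsBase B ∧ B ⊆ F ∧ (n : ℕ∞) < (F \ B).encard)
    (T : Set α) (hT : T ⊆ M.E) (hcoloop : ∀ e ∈ T, ∀ B, M.IsBase B → e ∈ B)
    (P : Matroid α) (hP : IsFinitarization P (M.con T)) :
    (∀ F B, P.IsBase F → (M.con T).IsBase B → B ⊆ F → (F \ B).Finite) ∧
      (∀ n : ℕ, ∃ F B, P.IsBase F ∧ (M.con T).IsBase B ∧ B ⊆ F ∧ (n : ℕ∞) < (F \ B).encard) :=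
  stmt_12_general M N hfin hnearly hnotk T hcoloop P hP
end

section
/- If M is a nearly finitary matroid with finitarization N, then every independent set F of N contains an independent set S of M with F \ S finite (hence the near finitarization of M equals N). -/
/-!
Extend `F` to a base `F'` of `N`. Each `y ∈ M.E \ F'` makes `insert y F'` dependent in `N`, hence
some finite subset `J` of it dependent in `M`; as `J \ {y} ⊆ F'` is `M`-independent, `y` lies in
`M.closure F'`. So `F'` spans `M`, an `M`-basis `B` of `F'` is an `M`-base, `F' \ B` is finite by
near finitarity, and `S = B ∩ F` works.
-/

open Set Matroid

namespace IsFinitarization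

variable {α : Type*} {M N : Matroid α}

lemma indep_of_subset_of_finite (h : IsFinitarization N M) {I J : Set α} (hI : N.Indep I)
    (hJI : J ⊆ I) (hJ : J.Finite) : M.Indep J :=
  (h.2 I (h.1 ▸ hI.subset_ground)).1 hI J hJI hJ

lemma exists_finite_dep (h : IsFinitarization N M) {X : Set α} (hX : X ⊆ M.E)
    (hXN : ¬ N.Indep X) : ∃ J ⊆ X, J.Finite ∧ M.Dep J := by
  obtain ⟨J, hJX, hJ, hJM⟩ : ∃ J ⊆ X, J.Finite ∧ ¬ M.Indep J := by
    simpa using (h.2 X hX).not.1 hXN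
  exact ⟨J, hJX, hJ, hJM, hJX.trans hX⟩

lemma spanning_of_isBase (h : IsFinitarization N M) {F : Set α} (hF : N.IsBase F) :
    M.Spanning F := by
  have hFE : F ⊆ M.E := h.1 ▸ hF.subset_ground
  rw [spanning_iff_ground_subset_closure hFE]
  intro y hy
  by_cases hyF : y ∈ F
  · exact M.subset_closure F hFE hyF
  obtain ⟨J, hJ, hJfin, hJdep⟩ :=
    h.exists_finite_dep (insert_subset hy hFE) (hF.insert_dep ⟨h.1 ▸ hy, hyF⟩).not_indep
  have hJyF : J \ {y} ⊆ F := sdiff_singleton_subset_iff.2 hJ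
  have hJy : M.Indep (J \ {y}) := h.indep_of_subset_of_finite hF.indep hJyF hJfin.sdiff
  have hyJy : y ∈ M.closure (J \ {y}) := by
    rw [hJy.mem_closure_iff_of_notMem (fun hy' ↦ hy'.2 rfl)]
    exact hJdep.superset (subset_insert_sdiff_singleton y J) (insert_subset hy hJy.subset_ground)
  exact M.closure_subset_closure hJyF hyJy

lemma exists_isBase_subset_of_isBase (h : IsFinitarization N M) {F : Set α} (hF : N.IsBase F) :
    ∃ B ⊆ F, M.IsBase B := by
  obtain ⟨B, hB⟩ := M.exists_isBasis F (h.1 ▸ hF.subset_ground)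
  exact ⟨B, hB.subset, hB.isBase_of_spanning (h.spanning_of_isBase hF)⟩

end IsFinitarization

/-- If `M` is a nearly finitary matroid with finitarization `N`, then every
`N`-independent set `F` contains an `M`-independent set `S` with `F \ S` finite. -/
theorem stmt_15 {α : Type*} (M N : Matroid α) (hfin : IsFinitarization N M)
    (hnearly : ∀ F B, N.IsBase F → M.IsBase B → B ⊆ F → (F \ B).Finite) :
    ∀ F, N.Indep F → ∃ S, M.Indep S ∧ S ⊆ F ∧ (F \ S).Finite := by
  intro F hF
  obtain ⟨F', hF', hFF'⟩ := hF.exists_isBase_superset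
  obtain ⟨B, hBF', hB⟩ := hfin.exists_isBase_subset_of_isBase hF'
  refine ⟨B ∩ F, hB.indep.subset inter_subset_left, inter_subset_right, ?_⟩
  rw [sdiff_inter_self_eq_sdiff]
  exact (hnearly F' B hF' hB hBF').subset (sdiff_subset_sdiff_left hFF')
end

section
/- There exists a nearly finitary independence system on ℕ that is not k-nearly finitary for any k ∈ ℕ: there exists a family L of subsets of ℕ such that (i) L is downward closed and ∅ ∈ L; (ii) every finite subset of ℕ belongs to L (so the unique base of the finitarization of L is ℕ); (iii) every maximal element S of L (under inclusion) has finite complement in ℕ; and (iv) for every k ∈ ℕ there exists a maximal element S of L with k < (ℕ \ S).encard. (Concretely, one may take L = { S ⊆ ℕ : S is disjoint from some block T_n }, where T_1 = {1}, T_2 = {2,3}, T_3 = {4,5,6}, … partition ℕ into blocks of sizes 1, 2, 3, ….) -/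
/-!
Cut `ℕ` into consecutive blocks of sizes `1, 2, 3, …` and call a set independent if it misses
some block. A finite set misses every block beyond its maximum, and the bases are exactly the
complements of the blocks: such a complement is independent, and any strictly larger set meets
every block. So every base has finite complement, yet the blocks have unbounded size.
-/

open Set Function

section DisjointFromSome

variable {α ι : Type*}

def disjointFromSome (T : ι → Set α) : Set (Set α) := {S | ∃ i, Disjoint S (T i)}

variable {T : ι → Set α}

lemma mem_disjointFromSome_of_subset {A B : Set α} (hB : B ∈ disjointFromSome T) (hAB : A ⊆ B) :
    A ∈ disjointFromSome T :=
  let ⟨i, hi⟩ := hB; ⟨i, hi.mono_left hAB⟩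

lemma exists_eq_compl_of_maximal_disjointFromSome {S : Set α}
    (hS : Maximal (· ∈ disjointFromSome T) S) : ∃ i, S = (T i)ᶜ := by
  obtain ⟨⟨i, hi⟩, hmax⟩ := hS
  have hsub : S ⊆ (T i)ᶜ := subset_compl_iff_disjoint_right.2 hi
  exact ⟨i, hsub.antisymm (hmax ⟨i, disjoint_compl_left⟩ hsub)⟩

lemma maximal_compl_disjointFromSome (hdisj : Pairwise (Disjoint on T))
    (hne : ∀ i, (T i).Nonempty) (i : ι) : Maximal (· ∈ disjointFromSome T) (T i)ᶜ := by
  refine ⟨⟨i, disjoint_compl_left⟩, ?_⟩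
  rintro S ⟨j, hj⟩ hsub
  obtain rfl | hji := eq_or_ne j i
  · exact subset_compl_iff_disjoint_right.2 hj
  · obtain ⟨x, hx⟩ := hne j
    exact absurd (hsub (disjoint_left.1 (hdisj hji) hx)) (disjoint_right.1 hj hx)

end DisjointFromSome

def blockStart (n : ℕ) : ℕ := ∑ i ∈ Finset.range n, (i + 1)

/-- The paper's block `T_(n+1)`, shifted down by one: `{0}, {1, 2}, {3, 4, 5}, …`. -/
def block (n : ℕ) : Set ℕ := Ico (blockStart n) (blockStart (n + 1))

lemma blockStart_succ (n : ℕ) : blockStart (n + 1) = blockStart n + (n + 1) :=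
  Finset.sum_range_succ _ _

lemma strictMono_blockStart : StrictMono blockStart :=
  strictMono_nat_of_lt_succ fun n => by rw [blockStart_succ]; omega

lemma pairwise_disjoint_block : Pairwise (Disjoint on block) :=
  strictMono_blockStart.monotone.pairwise_disjoint_on_Ico_succ

lemma encard_block (n : ℕ) : (block n).encard = n + 1 := by
  rw [block, ← Finset.coe_Ico, encard_coe_eq_coe_finsetCard, Nat.card_Ico, blockStart_succ]
  simp

lemma block_nonempty (n : ℕ) : (block n).Nonempty :=
  nonempty_Ico.2 (strictMono_blockStart n.lt_succ_self)

lemma disjoint_block_of_mem_upperBounds {S : Set ℕ} {N : ℕ} (hN : N ∈ upperBounds S) :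
    Disjoint S (block (N + 1)) := by
  have hN_lt : N < blockStart (N + 1) := N.lt_succ_self.trans_le (strictMono_blockStart.id_le _)
  exact disjoint_left.2 fun x hx hx' => (hx'.1.trans (hN hx)).not_gt hN_lt

/-- There exists a nearly finitary independence system on `ℕ` that is not
`k`-nearly finitary for any `k`: a downward-closed family `L` of subsets of `ℕ` containing
`∅` and all finite sets (so the unique base of its finitarization is `ℕ`), every maximal
member of which has finite complement, but with maximal members of complement of
arbitrarily large cardinality. -/
theorem stmt_16 :
    ∃ L : Set (Set ℕ),
      (∅ ∈ L ∧ ∀ A B : Set ℕ, B ∈ L → A ⊆ B → A ∈ L) ∧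
      (∀ S : Set ℕ, S.Finite → S ∈ L) ∧
      (∀ S : Set ℕ, Maximal (· ∈ L) S → (Set.univ \ S).Finite) ∧
      (∀ k : ℕ, ∃ S : Set ℕ, Maximal (· ∈ L) S ∧ (k : ℕ∞) < (Set.univ \ S).encard) := by
  refine ⟨disjointFromSome block,
    ⟨⟨0, disjoint_bot_left⟩, fun A B hB hAB => mem_disjointFromSome_of_subset hB hAB⟩,
    fun S hS => ?_, fun S hS => ?_, fun k => ⟨(block k)ᶜ, ?_, ?_⟩⟩
  · obtain ⟨N, hN⟩ := hS.bddAbove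
    exact ⟨N + 1, disjoint_block_of_mem_upperBounds hN⟩
  · obtain ⟨n, rfl⟩ := exists_eq_compl_of_maximal_disjointFromSome hS
    rw [← compl_eq_univ_sdiff, compl_compl]
    exact finite_Ico _ _
  · exact maximal_compl_disjointFromSome pairwise_disjoint_block block_nonempty k
  · rw [← compl_eq_univ_sdiff, compl_compl, encard_block]
    exact ENat.lt_add_one_iff (ENat.natCast_ne_top k) |>.2 le_rfl
end

section
/- For every n ∈ ℕ there exists a matroid M with finitarization N whose finitarization spectrum Spec(M) := { (F \ B).encard : F a base of N, B a base of M, B ⊆ F } is exactly {0, 1, …, n} ⊆ ℕ∞; in particular M is nearly finitary and its spectrum has size n + 1. (The paper realizes such M as the algebraic cycle matroid of n disjoint one-way infinite ladders.) -/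
open Set

section LinearAlgebra

variable {ι K V : Type*} [DivisionRing K] [AddCommGroup V] [Module K V] {v : ι → V}

theorem LinearIndepOn.exists_insert_of_ncard_lt {I J : Set ι} (hI : LinearIndepOn K v I)
    (hIfin : I.Finite) (hJ : LinearIndepOn K v J) (hJfin : J.Finite) (hlt : I.ncard < J.ncard) :
    ∃ e ∈ J, e ∉ I ∧ LinearIndepOn K v (insert e I) := by
  by_contra! h
  have hspan : Submodule.span K (v '' J) ≤ Submodule.span K (v '' I) := by
    refine Submodule.span_le.2 ?_
    rintro _ ⟨e, he, rfl⟩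
    by_cases heI : e ∈ I
    · exact Submodule.subset_span (mem_image_of_mem v heI)
    · by_contra hnot
      exact h e he heI (hI.insert hnot)
  have hle : (Module.rank K (Submodule.span K (v '' J))).toENat ≤
      (Module.rank K (Submodule.span K (v '' I))).toENat :=
    Cardinal.toENat.monotone' (Submodule.rank_mono hspan)
  rw [toENat_rank_span_set hI, toENat_rank_span_set hJ, ← hIfin.cast_ncard_eq,
    ← hJfin.cast_ncard_eq, Nat.cast_le] at hle
  omega

theorem linearIndepOn_of_exists_private_coord {κ : Type*} {v : ι → κ → K} {S : Set ι}
    (hS : S.Finite)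
    (h : ∀ T ⊆ S, T.Nonempty → ∃ x ∈ T, ∃ c, v x c ≠ 0 ∧ ∀ y ∈ T, y ≠ x → v y c = 0) :
    LinearIndepOn K v S := by
  suffices ∀ N, ∀ T ⊆ S, T.ncard = N → LinearIndepOn K v T from this _ S Subset.rfl rfl
  intro N
  induction N with
  | zero =>
    intro T hTS hT
    rw [ncard_eq_zero (hS.subset hTS)] at hT
    simp [hT]
  | succ N ih =>
    intro T hTS hT
    have hTne : T.Nonempty := nonempty_of_ncard_ne_zero (by omega)
    obtain ⟨x, hxT, c, hxc, hc⟩ := h T hTS hTne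
    rw [← insert_sdiff_self_of_mem hxT]
    refine (ih _ (sdiff_subset.trans hTS) ?_).insert fun hx => hxc ?_
    · rw [ncard_sdiff_singleton_of_mem hxT, hT, Nat.add_sub_cancel]
    · have hker : Submodule.span K (v '' (T \ {x})) ≤ LinearMap.ker (LinearMap.proj c) := by
        refine Submodule.span_le.2 ?_
        rintro _ ⟨y, ⟨hyT, hyx⟩, rfl⟩
        exact hc y hyT hyx
      exact hker hx

end LinearAlgebra

lemma Set.Finite.exists_ge_notMem_of_injective {α : Type*} {S : Set α} (hS : S.Finite)
    {f : ℕ → α} (hf : Function.Injective f) (v : ℕ) : ∃ b, v ≤ b ∧ f b ∉ S := by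
  by_contra! h
  exact ((Ici_infinite v).image hf.injOn) (hS.subset (by rintro _ ⟨b, hb, rfl⟩; exact h b hb))

namespace Matroid

variable {α : Type*}

def finitarization (M : Matroid α) : Matroid α :=
  (IndepMatroid.ofFinitaryCardAugment M.E (fun I => ∀ J ⊆ I, J.Finite → M.Indep J)
    (fun J hJ _ => by rw [subset_empty_iff.1 hJ]; exact M.empty_indep)
    (fun _ _ hJ hIJ K hKI hKfin => hJ K (hKI.trans hIJ) hKfin)
    (by
      intro I J hI hIfin hJ hJfin hlt
      have hlt' : I.encard < J.encard := by
        rw [← hIfin.cast_ncard_eq, ← hJfin.cast_ncard_eq]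
        exact_mod_cast hlt
      obtain ⟨e, ⟨heJ, heI⟩, hins⟩ :=
        (hI I Subset.rfl hIfin).augment (hJ J Subset.rfl hJfin) hlt'
      exact ⟨e, heJ, heI, fun K hK _ => hins.subset hK⟩)
    (fun _ h J hJI hJfin => h J hJI hJfin J Subset.rfl hJfin)
    (fun I h x hx => (h {x} (singleton_subset_iff.2 hx) (finite_singleton x)).subset_ground rfl)
    ).matroid

lemma finitarization_indep_iff {M : Matroid α} {I : Set α} :
    M.finitarization.Indep I ↔ ∀ J ⊆ I, J.Finite → M.Indep J := Iff.rfl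

lemma isFinitarization_finitarization (M : Matroid α) : IsFinitarization M.finitarization M :=
  ⟨rfl, fun _ _ => Iff.rfl⟩

end Matroid

lemma ENat.encard_Iic_coe (n : ℕ) : (Iic (n : ℕ∞)).encard = n + 1 := by
  have h : Iic (n : ℕ∞) = (fun k : ℕ => (k : ℕ∞)) '' Iic n := by
    ext c
    simp only [mem_Iic, mem_image]
    constructor
    · intro hc
      obtain ⟨k, rfl, hk⟩ := ENat.le_natCast_iff.1 hc
      exact ⟨k, hk, rfl⟩
    · rintro ⟨k, hk, rfl⟩
      exact_mod_cast hk
  rw [h, Nat.cast_injective.injOn.encard_image, ← Finset.coe_Iic,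
    encard_coe_eq_coe_finsetCard, Nat.card_Iic, Nat.cast_add, Nat.cast_one]

namespace Fan

/-- `spoke m i` joins the hub to vertex `i` of fan `m`; `rim m i` joins vertices `i` and
`i + 1` of fan `m`. -/
inductive Edge (n : ℕ) : Type
  | spoke (m : Fin n) (i : ℕ) : Edge n
  | rim (m : Fin n) (i : ℕ) : Edge n

open Edge Matroid

variable {n : ℕ}

def Edge.fan : Edge n → Fin n
  | spoke m _ => m
  | rim m _ => m

lemma spoke_injective (m : Fin n) : Function.Injective (spoke m) := fun _ _ h => by injection h

lemma rim_injective (m : Fin n) : Function.Injective (rim m) := fun _ _ h => by injection h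

def cycle (m : Fin n) (i j : ℕ) : Set (Edge n) :=
  {x | match x with
    | spoke m' l => m' = m ∧ (l = i ∨ l = j)
    | rim m' k => m' = m ∧ min i j ≤ k ∧ k < max i j}

/-- The edges leaving the vertex interval `[a, b]` of fan `m`. -/
def bond (m : Fin n) (a b : ℕ) : Set (Edge n) :=
  {x | match x with
    | spoke m' l => m' = m ∧ a ≤ l ∧ l ≤ b
    | rim m' k => m' = m ∧ (k = b ∨ k + 1 = a)}

section Membership

variable {m m' : Fin n} {i j k l a b : ℕ}

@[simp] lemma spoke_mem_cycle : spoke m' l ∈ cycle m i j ↔ m' = m ∧ (l = i ∨ l = j) := Iff.rfl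

@[simp] lemma rim_mem_cycle : rim m' k ∈ cycle m i j ↔ m' = m ∧ min i j ≤ k ∧ k < max i j :=
  Iff.rfl

@[simp] lemma spoke_mem_bond : spoke m' l ∈ bond m a b ↔ m' = m ∧ a ≤ l ∧ l ≤ b := Iff.rfl

@[simp] lemma rim_mem_bond : rim m' k ∈ bond m a b ↔ m' = m ∧ (k = b ∨ k + 1 = a) := Iff.rfl

end Membership

lemma cycle_comm (m : Fin n) (i j : ℕ) : cycle m i j = cycle m j i := by
  ext (⟨m', l⟩ | ⟨m', k⟩) <;> simp [or_comm, min_comm, max_comm]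

lemma cycle_finite (m : Fin n) (i j : ℕ) : (cycle m i j).Finite := by
  refine (((finite_Iic (max i j)).image (spoke m)).union
    ((finite_Iic (max i j)).image (rim m))).subset ?_
  rintro (⟨m', l⟩ | ⟨m', k⟩) hx <;> simp only [spoke_mem_cycle, rim_mem_cycle] at hx
  · exact Or.inl ⟨l, by simp only [mem_Iic]; omega, by rw [hx.1]⟩
  · exact Or.inr ⟨k, by simp only [mem_Iic]; omega, by rw [hx.1]⟩

lemma bond_finite (m : Fin n) (a b : ℕ) : (bond m a b).Finite := by
  refine (((finite_Iic (a + b)).image (spoke m)).union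
    ((finite_Iic (a + b)).image (rim m))).subset ?_
  rintro (⟨m', l⟩ | ⟨m', k⟩) hx <;> simp only [spoke_mem_bond, rim_mem_bond] at hx
  · exact Or.inl ⟨l, by simp only [mem_Iic]; omega, by rw [hx.1]⟩
  · exact Or.inr ⟨k, by simp only [mem_Iic]; omega, by rw [hx.1]⟩

def Joined (S : Set (Edge n)) (m : Fin n) (i j : ℕ) : Prop :=
  ∀ k, min i j ≤ k → k < max i j → rim m k ∈ S

def HubJoined (S : Set (Edge n)) (m : Fin n) (i : ℕ) : Prop :=
  ∃ c, spoke m c ∈ S ∧ Joined S m c i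

def Acyclic (S : Set (Edge n)) : Prop :=
  ∀ m i j, i ≠ j → ¬ cycle m i j ⊆ S

def BondFree (S : Set (Edge n)) : Prop :=
  ∀ m a b, a ≤ b → ¬ bond m a b ⊆ S

section Joined

variable {S T : Set (Edge n)} {m : Fin n} {i j k : ℕ}

lemma Joined.mono (h : Joined S m i j) (hST : S ⊆ T) : Joined T m i j :=
  fun k h₁ h₂ => hST (h k h₁ h₂)

lemma Joined.symm (h : Joined S m i j) : Joined S m j i :=
  fun k h₁ h₂ => h k (by omega) (by omega)

lemma Joined.trans (h₁ : Joined S m i j) (h₂ : Joined S m j k) : Joined S m i k := by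
  intro l hl₁ hl₂
  rcases (by omega : (min i j ≤ l ∧ l < max i j) ∨ (min j k ≤ l ∧ l < max j k)) with h | h
  · exact h₁ l h.1 h.2
  · exact h₂ l h.1 h.2

lemma Joined.mono_interval {a b : ℕ} (h : Joined S m a b)
    (h₁ : min a b ≤ min i j) (h₂ : max i j ≤ max a b) : Joined S m i j :=
  fun k hk₁ hk₂ => h k (by omega) (by omega)

lemma joined_succ (h : rim m k ∈ S) : Joined S m k (k + 1) :=
  fun l h₁ h₂ => (by omega : l = k) ▸ h

lemma HubJoined.mono (h : HubJoined S m i) (hST : S ⊆ T) : HubJoined T m i :=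
  let ⟨c, hc, hci⟩ := h
  ⟨c, hST hc, hci.mono hST⟩

lemma HubJoined.trans (h : HubJoined S m i) (hij : Joined S m i j) : HubJoined S m j :=
  let ⟨c, hc, hci⟩ := h
  ⟨c, hc, hci.trans hij⟩

lemma cycle_subset_iff :
    cycle m i j ⊆ S ↔ spoke m i ∈ S ∧ spoke m j ∈ S ∧ Joined S m i j := by
  refine ⟨fun h => ⟨h (by simp), h (by simp), fun k h₁ h₂ => h (by simp [h₁, h₂])⟩, ?_⟩
  rintro ⟨hi, hj, hij⟩ (⟨m', l⟩ | ⟨m', k⟩) hx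
  · obtain ⟨rfl, rfl | rfl⟩ := hx
    exacts [hi, hj]
  · obtain ⟨rfl, h₁, h₂⟩ := hx
    exact hij k h₁ h₂

end Joined

section Acyclic

variable {S T : Set (Edge n)}

lemma Acyclic.mono (hT : Acyclic T) (hST : S ⊆ T) : Acyclic S :=
  fun m i j hij h => hT m i j hij (h.trans hST)

lemma BondFree.mono (hT : BondFree T) (hST : S ⊆ T) : BondFree S :=
  fun m a b hab h => hT m a b hab (h.trans hST)

lemma acyclic_of_forall_finite (h : ∀ J ⊆ S, J.Finite → Acyclic J) : Acyclic S :=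
  fun m i j hij hsub => h _ hsub (cycle_finite m i j) m i j hij Subset.rfl

lemma acyclic_cycle_sdiff {m : Fin n} {i j : ℕ} {x : Edge n} (hx : x ∈ cycle m i j) :
    Acyclic (cycle m i j \ {x}) := by
  intro m' i' j' hij' hsub
  have hi' := (hsub (by simp : spoke m' i' ∈ cycle m' i' j')).1
  have hj' := (hsub (by simp : spoke m' j' ∈ cycle m' i' j')).1
  simp only [spoke_mem_cycle] at hi' hj'
  obtain ⟨rfl, hi'⟩ := hi'
  obtain ⟨-, hj'⟩ := hj'
  have hcyc : cycle m' i j ⊆ cycle m' i' j' := by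
    rintro (⟨m'', l⟩ | ⟨m'', k⟩) hy <;> simp only [spoke_mem_cycle, rim_mem_cycle] at hy ⊢
    · exact ⟨hy.1, by omega⟩
    · exact ⟨hy.1, by omega, by omega⟩
  exact (hsub (hcyc hx)).2 rfl

lemma Acyclic.exists_cycle_of_insert {x : Edge n} (hT : Acyclic T) (h : ¬ Acyclic (insert x T)) :
    ∃ m i j, i ≠ j ∧ x ∈ cycle m i j ∧ cycle m i j ⊆ insert x T := by
  simp only [Acyclic, not_forall, not_not] at h
  obtain ⟨m, i, j, hij, hsub⟩ := h
  refine ⟨m, i, j, hij, by_contra fun hx => hT m i j hij fun y hy => ?_, hsub⟩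
  exact (hsub hy).resolve_left fun h => hx (h ▸ hy)

end Acyclic

/-- The usual representation of a graphic matroid, with the hub as the vertex whose
coordinate is dropped. -/
noncomputable def vec : Edge n → (Fin n × ℕ → ℚ)
  | spoke m i => Pi.single (m, i) 1
  | rim m i => Pi.single (m, i) 1 - Pi.single (m, i + 1) 1

lemma vec_rim (m : Fin n) (i : ℕ) : vec (rim m i) = vec (spoke m i) - vec (spoke m (i + 1)) :=
  rfl

lemma vec_apply_eq_zero {x : Edge n} {m : Fin n} {v : ℕ} (h₁ : x ≠ spoke m v) (h₂ : x ≠ rim m v)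
    (h₃ : ∀ k, k + 1 = v → x ≠ rim m k) : vec x (m, v) = 0 := by
  rcases x with ⟨m', i⟩ | ⟨m', i⟩ <;>
    simp only [ne_eq, spoke.injEq, rim.injEq, reduceCtorEq, not_false_eq_true, not_and]
      at h₁ h₂ h₃ <;>
    simp only [vec, Pi.sub_apply, Pi.single_apply, Prod.mk.injEq] <;> split_ifs <;> grind

/-- The private coordinate is the outer vertex of a leaf of the forest `S`: with `v` the lowest
vertex of a fan met by `S`, either `spoke m v` or `rim m v` is a leaf at `v`, or the rim path
of `S` starting at `v` ends in a leaf. -/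
lemma Acyclic.exists_private_coord {S : Set (Edge n)} (hS : Acyclic S) (hfin : S.Finite)
    (hne : S.Nonempty) :
    ∃ x ∈ S, ∃ c, vec x c ≠ 0 ∧ ∀ y ∈ S, y ≠ x → vec y c = 0 := by
  classical
  obtain ⟨x₀, hx₀⟩ := hne
  obtain ⟨m, hex⟩ : ∃ m : Fin n, ∃ v, spoke m v ∈ S ∨ rim m v ∈ S := by
    rcases x₀ with ⟨m, v⟩ | ⟨m, v⟩
    exacts [⟨m, v, Or.inl hx₀⟩, ⟨m, v, Or.inr hx₀⟩]
  set v := Nat.find hex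
  have hbelow : ∀ k, k + 1 = v → rim m k ∉ S :=
    fun k hk h => Nat.find_min hex (by omega : k < v) (Or.inr h)
  by_cases hsv : spoke m v ∈ S
  swap
  · refine ⟨rim m v, (Nat.find_spec hex).resolve_left hsv, (m, v), by simp [vec], fun y hy hyx =>
      vec_apply_eq_zero (fun h => hsv (h ▸ hy)) hyx fun k hk h => hbelow k hk (h ▸ hy)⟩
  have hexb : ∃ b, v ≤ b ∧ rim m b ∉ S := hfin.exists_ge_notMem_of_injective (rim_injective m) v
  set b := Nat.find hexb
  obtain ⟨hvb, hb⟩ : v ≤ b ∧ rim m b ∉ S := Nat.find_spec hexb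
  have hjoined : Joined S m v b := fun k h₁ h₂ =>
    by_contra fun h => Nat.find_min hexb (by omega : k < b) ⟨by omega, h⟩
  rcases hvb.eq_or_lt with hvb | hvb
  · refine ⟨spoke m v, hsv, (m, v), by simp [vec], fun y hy hyx =>
      vec_apply_eq_zero hyx (fun h => hb (hvb ▸ h ▸ hy)) fun k hk h => hbelow k hk (h ▸ hy)⟩
  have hsb : spoke m b ∉ S := fun h => hS m v b hvb.ne (cycle_subset_iff.2 ⟨hsv, h, hjoined⟩)
  refine ⟨rim m (b - 1), hjoined (b - 1) (by omega) (by omega), (m, b),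
    by simp [vec, Nat.sub_add_cancel (by omega : 1 ≤ b),
      Pi.single_eq_of_ne (show (m, b) ≠ (m, b - 1) by simp; omega)],
    fun y hy hyx =>
      vec_apply_eq_zero (fun h => hsb (h ▸ hy)) (fun h => hb (h ▸ hy)) fun k hk h => ?_⟩
  exact hyx (h.trans (by rw [← hk, Nat.add_sub_cancel]))

lemma Acyclic.linearIndepOn {S : Set (Edge n)} (hS : Acyclic S) (hfin : S.Finite) :
    LinearIndepOn ℚ vec S :=
  linearIndepOn_of_exists_private_coord hfin fun _ hT hne =>
    (hS.mono hT).exists_private_coord (hfin.subset hT) hne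

lemma vec_spoke_sub_mem_span (m : Fin n) {i j : ℕ} (hij : i ≤ j) :
    vec (spoke m i) - vec (spoke m j) ∈ Submodule.span ℚ (vec '' (rim m '' Ico i j)) := by
  induction j, hij using Nat.le_induction with
  | base => simp
  | succ j hij ih =>
    rw [← sub_add_sub_cancel _ (vec (spoke m j)), ← vec_rim]
    refine add_mem (Submodule.span_mono (image_mono (image_mono ?_)) ih)
      (Submodule.subset_span ⟨rim m j, ⟨j, ⟨hij, j.lt_succ_self⟩, rfl⟩, rfl⟩)
    exact Ico_subset_Ico_right j.le_succ

lemma not_linearIndepOn_cycle (m : Fin n) {i j : ℕ} (hij : i ≠ j) :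
    ¬ LinearIndepOn ℚ vec (cycle m i j) := by
  wlog hlt : i < j generalizing i j
  · rw [cycle_comm]; exact this hij.symm (by omega)
  intro h
  have hi : spoke m i ∈ cycle m i j := by simp
  rw [← insert_sdiff_self_of_mem hi, linearIndepOn_insert (fun h => h.2 rfl)] at h
  refine h.2 ?_
  rw [← add_sub_cancel (vec (spoke m j)) (vec (spoke m i))]
  refine add_mem (Submodule.subset_span ⟨spoke m j, ⟨⟨rfl, Or.inr rfl⟩, by simp [hlt.ne']⟩, rfl⟩)
    (Submodule.span_mono (image_mono ?_) (vec_spoke_sub_mem_span m hlt.le))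
  rintro _ ⟨k, hk, rfl⟩
  simp only [mem_Ico] at hk
  exact ⟨⟨rfl, by omega, by omega⟩, by simp⟩

lemma LinearIndepOn.acyclic {S : Set (Edge n)} (hS : LinearIndepOn ℚ vec S) : Acyclic S :=
  fun m _ _ hij hsub => not_linearIndepOn_cycle m hij (hS.mono hsub)

variable (n) in
noncomputable def cycleMatroid : Matroid (Edge n) :=
  (IndepMatroid.ofFinitaryCardAugment univ Acyclic
    (fun m i j _ h => h (show spoke m i ∈ cycle m i j by simp))
    (fun _ _ hJ hIJ => hJ.mono hIJ)
    (fun _ _ hI hIfin hJ hJfin hlt => by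
      obtain ⟨e, heJ, heI, h⟩ := (hI.linearIndepOn hIfin).exists_insert_of_ncard_lt hIfin
        (hJ.linearIndepOn hJfin) hJfin hlt
      exact ⟨e, heJ, heI, LinearIndepOn.acyclic h⟩)
    (fun _ => acyclic_of_forall_finite)
    (fun _ _ => subset_univ _)).matroid

@[simp] lemma cycleMatroid_indep_iff {S : Set (Edge n)} : (cycleMatroid n).Indep S ↔ Acyclic S :=
  Iff.rfl

@[simp] lemma cycleMatroid_ground : (cycleMatroid n).E = univ := rfl

section Closure

variable {X : Set (Edge n)} {m : Fin n}

lemma mem_closure_of_mem_cycle {x : Edge n} {i j : ℕ} (hij : i ≠ j) (hx : x ∈ cycle m i j)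
    (h : cycle m i j ⊆ insert x X) : x ∈ (cycleMatroid n).closure X := by
  have hindep : (cycleMatroid n).Indep (cycle m i j \ {x}) := acyclic_cycle_sdiff hx
  have hdep : ¬ (cycleMatroid n).Indep (insert x (cycle m i j \ {x})) := by
    rw [insert_sdiff_self_of_mem hx]
    exact fun h => h m i j hij Subset.rfl
  refine (cycleMatroid n).closure_subset_closure (X := cycle m i j \ {x}) ?_ ?_
  · rw [sdiff_subset_iff, singleton_union]
    exact h
  · rw [hindep.mem_closure_iff]
    exact Or.inl ⟨hdep, subset_univ _⟩

lemma spoke_mem_closure {i : ℕ} (h : HubJoined X m i) :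
    spoke m i ∈ (cycleMatroid n).closure X := by
  obtain ⟨c, hc, hci⟩ := h
  obtain rfl | hne := eq_or_ne c i
  · exact (cycleMatroid n).mem_closure_of_mem hc (subset_univ _)
  · exact mem_closure_of_mem_cycle hne (by simp) (cycle_subset_iff.2
      ⟨mem_insert_of_mem _ hc, mem_insert _ _, hci.mono (subset_insert _ _)⟩)

lemma rim_mem_closure {k : ℕ} (hk : HubJoined X m k) (hk' : HubJoined X m (k + 1)) :
    rim m k ∈ (cycleMatroid n).closure X := by
  by_cases hx : rim m k ∈ X
  · exact (cycleMatroid n).mem_closure_of_mem hx (subset_univ _)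
  obtain ⟨c, hc, hck⟩ := hk
  obtain ⟨c', hc', hck'⟩ := hk'
  have h₁ : c ≤ k := by_contra fun h => hx (hck k (by omega) (by omega))
  have h₂ : k + 1 ≤ c' := by_contra fun h => hx (hck' k (by omega) (by omega))
  refine mem_closure_of_mem_cycle (i := c) (j := c') (by omega) ⟨rfl, by omega, by omega⟩
    (cycle_subset_iff.2 ⟨mem_insert_of_mem _ hc, mem_insert_of_mem _ hc', ?_⟩)
  exact ((hck.mono (subset_insert _ _)).trans (joined_succ (mem_insert _ _))).trans
    (hck'.symm.mono (subset_insert _ _))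

lemma spanning_of_forall_hubJoined (h : ∀ m i, HubJoined X m i) :
    (cycleMatroid n).Spanning X := by
  rw [spanning_iff_ground_subset_closure (subset_univ _)]
  rintro (⟨m, i⟩ | ⟨m, k⟩) -
  · exact spoke_mem_closure (h m i)
  · exact rim_mem_closure (h m k) (h m (k + 1))

end Closure

lemma exists_mem_cycle_inter_bond {m m' : Fin n} {a b i j : ℕ} (hab : a ≤ b) (hij : i ≠ j)
    (h : spoke m a ∈ cycle m' i j) : ∃ y ∈ cycle m' i j, y ∈ bond m a b ∧ y ≠ spoke m a := by
  obtain ⟨rfl, hai⟩ := h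
  obtain ⟨l, hl, hla⟩ : ∃ l, (l = i ∨ l = j) ∧ l ≠ a := by
    rcases hai with rfl | rfl
    exacts [⟨j, Or.inr rfl, hij.symm⟩, ⟨i, Or.inl rfl, hij⟩]
  rcases lt_or_ge b l with hbl | hlb
  · exact ⟨rim m b, ⟨rfl, by omega, by omega⟩, ⟨rfl, Or.inl rfl⟩, by simp⟩
  rcases lt_or_ge l a with hla' | hal
  · exact ⟨rim m (a - 1), ⟨rfl, by omega, by omega⟩, ⟨rfl, Or.inr (by omega)⟩, by simp⟩
  · exact ⟨spoke m l, ⟨rfl, hl⟩, ⟨rfl, hal, hlb⟩, by simp [hla]⟩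

variable (n) in
noncomputable def bondMatroid : Matroid (Edge n) := (cycleMatroid n)✶

lemma bondMatroid_isBase_iff {B : Set (Edge n)} :
    (bondMatroid n).IsBase B ↔ (cycleMatroid n).IsBase Bᶜ := by
  rw [bondMatroid, dual_isBase_iff (subset_univ _), cycleMatroid_ground, compl_eq_univ_sdiff]

lemma bondMatroid_indep_iff {J : Set (Edge n)} :
    (bondMatroid n).Indep J ↔ (cycleMatroid n).Spanning Jᶜ := by
  change (cycleMatroid n).Coindep J ↔ _
  rw [coindep_iff_compl_spanning (subset_univ _), cycleMatroid_ground, compl_eq_univ_sdiff]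

section Tail

variable {C : Set (Edge n)} {m : Fin n} {i j : ℕ}

lemma rim_mem_of_not_hubJoined (hC : BondFree Cᶜ) (h : ¬ HubJoined C m i) (hij : i ≤ j) :
    rim m j ∈ C := by
  classical
  by_contra hj
  have hexb : ∃ b, i ≤ b ∧ rim m b ∉ C := ⟨j, hij, hj⟩
  have hexa : ∃ a, Joined C m a i := ⟨i, fun k h₁ h₂ => by omega⟩
  set a := Nat.find hexa
  set b := Nat.find hexb
  obtain ⟨hib, hb⟩ : i ≤ b ∧ rim m b ∉ C := Nat.find_spec hexb
  have hai : Joined C m a i := Nat.find_spec hexa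
  have ha : a ≤ i := Nat.find_min' hexa fun k h₁ h₂ => by omega
  have hib' : Joined C m i b := fun k h₁ h₂ =>
    by_contra fun hk => Nat.find_min hexb (by omega : k < b) ⟨by omega, hk⟩
  -- `[a, b]` is the `C`-component of vertex `i`, and the bond around it avoids `C`.
  refine hC m a b (by omega) fun x hx => ?_
  rcases x with ⟨m', l⟩ | ⟨m', k⟩
  · obtain ⟨rfl, h₁, h₂⟩ := hx
    exact fun hl => h ⟨l, hl, (hai.trans hib').mono_interval (by omega) (by omega)⟩
  · obtain ⟨rfl, rfl | hk⟩ := hx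
    · exact hb
    · exact fun hk' => Nat.find_min hexa (by omega : k < a) ((hk ▸ joined_succ hk').trans hai)

lemma not_hubJoined_of_le (hC : BondFree Cᶜ) (h : ¬ HubJoined C m i) (hij : i ≤ j) :
    ¬ HubJoined C m j :=
  fun hj => h (hj.trans fun _ h₁ _ => rim_mem_of_not_hubJoined hC h (by omega))

end Tail

lemma hubJoined_compl_of_bondFree {J : Set (Edge n)} (hJ : J.Finite) (h : BondFree J)
    (m : Fin n) (i : ℕ) : HubJoined Jᶜ m i := by
  by_contra hi
  obtain ⟨b, hib, hb⟩ := hJ.exists_ge_notMem_of_injective (spoke_injective m) i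
  exact not_hubJoined_of_le (by rwa [compl_compl]) hi hib ⟨b, hb, fun k h₁ h₂ => by omega⟩

lemma bondMatroid_indep_iff_bondFree {J : Set (Edge n)} (hJ : J.Finite) :
    (bondMatroid n).Indep J ↔ BondFree J := by
  refine ⟨fun hJind m a b hab hsub => ?_, fun h =>
    bondMatroid_indep_iff.2 (spanning_of_forall_hubJoined (hubJoined_compl_of_bondFree hJ h))⟩
  obtain ⟨T, hT, hTJ⟩ := (bondMatroid_indep_iff.1 hJind).exists_isBase_subset
  have haT : spoke m a ∉ T := fun h => hTJ h (hsub (by simp [hab]))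
  obtain ⟨m', i, j, hij, hai, hsubT⟩ := Acyclic.exists_cycle_of_insert hT.indep
    (hT.insert_dep ⟨mem_univ _, haT⟩).not_indep
  obtain ⟨y, hy, hyb, hya⟩ := exists_mem_cycle_inter_bond hab hij hai
  exact hTJ ((hsubT hy).resolve_left hya) (hsub hyb)

lemma finitarization_indep_iff_bondFree {F : Set (Edge n)} :
    (bondMatroid n).finitarization.Indep F ↔ BondFree F := by
  rw [finitarization_indep_iff]
  refine ⟨fun h m a b hab hsub => ?_,
    fun h J hJ hJfin => (bondMatroid_indep_iff_bondFree hJfin).2 (h.mono hJ)⟩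
  exact (bondMatroid_indep_iff_bondFree (bond_finite m a b)).1 (h _ hsub (bond_finite m a b))
    m a b hab Subset.rfl

section UpperBound

variable {T C X : Set (Edge n)} {m : Fin n}

lemma not_hubJoined_of_spoke_mem (hT : Acyclic T) (hXT : X ⊆ T) {c : ℕ} (hx : spoke m c ∈ T)
    (hxX : spoke m c ∉ X) : ¬ HubJoined X m c := fun h =>
  (cycleMatroid_indep_iff.2 hT).notMem_closure_sdiff_of_mem hx
    ((cycleMatroid n).closure_subset_closure (subset_sdiff_singleton hXT hxX) (spoke_mem_closure h))

lemma hubJoined_of_rim_mem_sdiff (hT : Acyclic T) (hCT : C ⊆ T) (hC : BondFree Cᶜ) {k : ℕ}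
    (hx : rim m k ∈ T \ C) : HubJoined C m k ∧ ¬ HubJoined C m (k + 1) := by
  have hk : HubJoined C m k := by_contra fun h => hx.2 (rim_mem_of_not_hubJoined hC h le_rfl)
  refine ⟨hk, fun hk' => (cycleMatroid_indep_iff.2 hT).notMem_closure_sdiff_of_mem hx.1 ?_⟩
  exact (cycleMatroid n).closure_subset_closure (subset_sdiff_singleton hCT hx.2)
    (rim_mem_closure hk hk')

lemma Acyclic.not_spoke_rim_mem_sdiff (hT : Acyclic T) (hCT : C ⊆ T) (hC : BondFree Cᶜ)
    {c k : ℕ} (hx : spoke m c ∈ T \ C) (hy : rim m k ∈ T \ C) : False := by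
  have hc := not_hubJoined_of_spoke_mem hT hCT hx.1 hx.2
  obtain ⟨hk, hk'⟩ := hubJoined_of_rim_mem_sdiff hT hCT hC hy
  rcases le_or_gt c k with hck | hck
  · exact not_hubJoined_of_le hC hc hck hk
  refine not_hubJoined_of_spoke_mem hT (insert_subset hy.1 hCT) hx.1 (by simp [hx.2]) ?_
  refine ((hk.mono (subset_insert _ _)).trans (joined_succ (mem_insert _ _))).trans ?_
  exact fun l h₁ _ => mem_insert_of_mem _ (rim_mem_of_not_hubJoined hC hk' (by omega))

lemma Acyclic.eq_of_mem_sdiff (hT : Acyclic T) (hCT : C ⊆ T) (hC : BondFree Cᶜ) {x y : Edge n}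
    (hx : x ∈ T \ C) (hy : y ∈ T \ C) (hxy : x.fan = y.fan) : x = y := by
  rcases x with ⟨m, c⟩ | ⟨m, k⟩ <;> rcases y with ⟨m', c'⟩ | ⟨m', k'⟩ <;>
    simp only [Edge.fan] at hxy <;> subst hxy
  · by_contra hne
    have hc := not_hubJoined_of_spoke_mem hT hCT hx.1 hx.2
    have hc' := not_hubJoined_of_spoke_mem hT hCT hy.1 hy.2
    refine not_hubJoined_of_spoke_mem hT (insert_subset hy.1 hCT) hx.1
      (fun h => h.elim (fun h => hne (by rw [h])) hx.2)
      ⟨c', mem_insert _ _, fun k h₁ _ => mem_insert_of_mem _ ?_⟩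
    rcases (by omega : c ≤ k ∨ c' ≤ k) with h | h
    · exact rim_mem_of_not_hubJoined hC hc h
    · exact rim_mem_of_not_hubJoined hC hc' h
  · exact (hT.not_spoke_rim_mem_sdiff hCT hC hx hy).elim
  · exact (hT.not_spoke_rim_mem_sdiff hCT hC hy hx).elim
  · have hk := (hubJoined_of_rim_mem_sdiff hT hCT hC hx).2
    have hk' := (hubJoined_of_rim_mem_sdiff hT hCT hC hy).2
    have h₁ : k' ≤ k := by_contra fun h => hy.2 (rim_mem_of_not_hubJoined hC hk (by omega))
    have h₂ : k ≤ k' := by_contra fun h => hx.2 (rim_mem_of_not_hubJoined hC hk' (by omega))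
    rw [le_antisymm h₂ h₁]

lemma Acyclic.encard_sdiff_le (hT : Acyclic T) (hCT : C ⊆ T) (hC : BondFree Cᶜ) :
    (T \ C).encard ≤ n :=
  calc (T \ C).encard = (Edge.fan '' (T \ C)).encard :=
        (InjOn.encard_image fun _ hx _ hy h => hT.eq_of_mem_sdiff hCT hC hx hy h).symm
    _ ≤ (univ : Set (Fin n)).encard := encard_le_encard (subset_univ _)
    _ = n := by simp

end UpperBound

lemma encard_sdiff_le_of_isBase {F B : Set (Edge n)}
    (hF : (bondMatroid n).finitarization.IsBase F) (hB : (bondMatroid n).IsBase B)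
    (hBF : B ⊆ F) : (F \ B).encard ≤ n := by
  rw [← compl_sdiff_compl]
  refine Acyclic.encard_sdiff_le (bondMatroid_isBase_iff.1 hB).indep (compl_subset_compl.2 hBF) ?_
  rw [compl_compl]
  exact finitarization_indep_iff_bondFree.1 hF.indep

section LowerBound

variable (P : Set (Fin n))

def tree : Set (Edge n) :=
  {x | match x with
    | spoke m i => m ∈ P → i = 0
    | rim m _ => m ∈ P}

def core : Set (Edge n) :=
  {x | match x with
    | spoke m i => m ∈ P → i = 0
    | rim m k => m ∈ P ∧ k ≠ 0}

variable {P} {m : Fin n} {i : ℕ}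

@[simp] lemma spoke_mem_tree : spoke m i ∈ tree P ↔ (m ∈ P → i = 0) := Iff.rfl
@[simp] lemma rim_mem_tree : rim m i ∈ tree P ↔ m ∈ P := Iff.rfl
@[simp] lemma spoke_mem_core : spoke m i ∈ core P ↔ (m ∈ P → i = 0) := Iff.rfl
@[simp] lemma rim_mem_core : rim m i ∈ core P ↔ m ∈ P ∧ i ≠ 0 := Iff.rfl

variable (P)

lemma isBase_tree : (cycleMatroid n).IsBase (tree P) := by
  refine Indep.isBase_of_spanning (fun m i j hij hsub => ?_)
    (spanning_of_forall_hubJoined fun m i => ?_)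
  · obtain ⟨hi, hj, hJ⟩ := cycle_subset_iff.1 hsub
    by_cases hm : m ∈ P
    · exact hij ((hi hm).trans (hj hm).symm)
    · exact hm (hJ (min i j) le_rfl (by omega))
  · by_cases hm : m ∈ P
    · exact ⟨0, fun _ => rfl, fun _ _ _ => hm⟩
    · exact ⟨i, fun h => absurd h hm, fun k h₁ h₂ => by omega⟩

lemma bondFree_compl_core : BondFree (core P)ᶜ := by
  intro m a b hab hsub
  by_cases hm : m ∈ P
  · obtain rfl | hb := Nat.eq_zero_or_pos b
    · exact hsub (show spoke m 0 ∈ bond m a 0 from ⟨rfl, hab, le_rfl⟩) fun _ => rfl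
    · exact hsub (show rim m b ∈ bond m a b from ⟨rfl, Or.inl rfl⟩) ⟨hm, hb.ne'⟩
  · exact hsub (show spoke m a ∈ bond m a b from ⟨rfl, le_rfl, hab⟩) fun h => absurd h hm

lemma isBase_compl_core : (bondMatroid n).finitarization.IsBase (core P)ᶜ := by
  refine Indep.isBase_of_forall_insert (finitarization_indep_iff_bondFree.2 (bondFree_compl_core P))
    fun x hx => ?_
  rw [finitarization_indep_iff_bondFree]
  replace hx : x ∈ core P := not_not.1 hx.2
  -- `x` is the only edge of `core P` in the bond around `[0, 0]`, `[i, i]` or `[1, k]`.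
  rcases x with ⟨m, i⟩ | ⟨m, k⟩
  · by_cases hm : m ∈ P
    · obtain rfl := hx hm
      refine fun h => h m 0 0 le_rfl fun y hy => ?_
      rcases y with ⟨m', l⟩ | ⟨m', l⟩ <;> obtain ⟨rfl, hy⟩ := hy
      · simp [(by omega : l = 0)]
      · simp [(by omega : l = 0)]
    · refine fun h => h m i i le_rfl fun y hy => ?_
      rcases y with ⟨m', l⟩ | ⟨m', l⟩ <;> obtain ⟨rfl, hy⟩ := hy
      · simp [(by omega : l = i)]
      · simp [hm]
  · obtain ⟨hm, hk⟩ := hx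
    refine fun h => h m 1 k (by omega) fun y hy => ?_
    rcases y with ⟨m', l⟩ | ⟨m', l⟩ <;> obtain ⟨rfl, hy⟩ := hy
    · exact mem_insert_of_mem _ fun h => by have := h hm; omega
    · rcases hy with rfl | hy
      · simp
      · simp [(by omega : l = 0)]

lemma core_subset_tree : core P ⊆ tree P := by
  rintro (⟨m, i⟩ | ⟨m, k⟩) hx
  exacts [hx, hx.1]

lemma tree_sdiff_core : tree P \ core P = (fun m => rim m 0) '' P := by
  ext (⟨m, i⟩ | ⟨m, k⟩) <;> simp only [mem_sdiff, spoke_mem_tree, spoke_mem_core, rim_mem_tree,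
    rim_mem_core, mem_image, rim.injEq, reduceCtorEq, and_false, exists_false] <;> grind

lemma exists_isBase_encard_sdiff_eq :
    ∃ F B, (bondMatroid n).finitarization.IsBase F ∧ (bondMatroid n).IsBase B ∧ B ⊆ F ∧
      (F \ B).encard = P.encard := by
  refine ⟨(core P)ᶜ, (tree P)ᶜ, isBase_compl_core P, ?_, compl_subset_compl.2 (core_subset_tree P),
    ?_⟩
  · rw [bondMatroid_isBase_iff, compl_compl]
    exact isBase_tree P
  · rw [compl_sdiff_compl, tree_sdiff_core]
    exact InjOn.encard_image fun _ _ _ _ h => by injection h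

end LowerBound

lemma spectrum_eq :
    {c : ℕ∞ | ∃ F B, (bondMatroid n).finitarization.IsBase F ∧ (bondMatroid n).IsBase B ∧
      B ⊆ F ∧ (F \ B).encard = c} = Iic (n : ℕ∞) := by
  ext c
  refine ⟨fun ⟨F, B, hF, hB, hBF, hc⟩ => hc ▸ encard_sdiff_le_of_isBase hF hB hBF, fun hc => ?_⟩
  obtain ⟨k, rfl, hk⟩ := ENat.le_natCast_iff.1 hc
  obtain ⟨F, B, hF, hB, hBF, hFB⟩ := exists_isBase_encard_sdiff_eq (range (Fin.castLE hk))
  exact ⟨F, B, hF, hB, hBF, by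
    rw [hFB, ← image_univ, (Fin.castLE_injective hk).encard_image]; simp⟩

end Fan

/-- For every `n` there is a (nearly finitary) matroid `M`, with
finitarization `N`, whose finitarization spectrum
`{ (F \ B).encard : F base of N, B base of M, B ⊆ F }` is exactly `{0, 1, …, n} ⊆ ℕ∞`;
in particular `M` is nearly finitary and the spectrum has `n + 1` elements. -/
theorem stmt_18 (n : ℕ) :
    ∃ (α : Type) (M N : Matroid α), IsFinitarization N M ∧
      {c : ℕ∞ | ∃ F B, N.IsBase F ∧ M.IsBase B ∧ B ⊆ F ∧ (F \ B).encard = c} =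
        {c : ℕ∞ | c ≤ (n : ℕ∞)} ∧
      (∀ F B, N.IsBase F → M.IsBase B → B ⊆ F → (F \ B).Finite) ∧
      {c : ℕ∞ | ∃ F B, N.IsBase F ∧ M.IsBase B ∧ B ⊆ F ∧ (F \ B).encard = c}.encard =
        (n + 1 : ℕ∞) := by
  refine ⟨Fan.Edge n, Fan.bondMatroid n, (Fan.bondMatroid n).finitarization,
    Matroid.isFinitarization_finitarization _, Fan.spectrum_eq,
    fun F B hF hB hBF => finite_of_encard_le_coe (Fan.encard_sdiff_le_of_isBase hF hB hBF), ?_⟩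
  rw [Fan.spectrum_eq, ENat.encard_Iic_coe]
end

section
/- Let K be a field, let V be a Hausdorff topological K-vector space (a T2 topological additive group with continuous scalar multiplication), let E be a countable type and f : E → V. For S ⊆ E let C_S(f) := { c : E → K | c vanishes outside S and the family (c e • f e) is summable }, and let f̂(c) := ∑' e, c e • f e. Call S ⊆ E independent if the only c ∈ C_S(f) with f̂(c) = 0 is c = 0. Then an independent set S is maximal among independent sets if and only if for every e ∈ E one has f e ∈ f̂(C_S(f)), i.e. there exists c ∈ C_S(f) with f̂(c) = f e. -/
/-!
Independence is inherited by subsets, so `S` is maximal iff no single `e ∉ S` can be added.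
If `f̂(c) = f e` with `c ∈ C_S(f)`, then `c - δ_e` is a nonzero dependence on `S ∪ {e}`.
Conversely, a nonzero dependence `c` on `S ∪ {e}` has `c e ≠ 0` because `S` is independent,
and `δ_e - (c e)⁻¹ • c ∈ C_S(f)` represents `f e`.
-/

section TopologicalIndependence

variable {K V E : Type*} [Field K] [AddCommGroup V] [Module K V]
  [TopologicalSpace V] [T2Space V]

/-- `C_S(f)`: coefficient functions supported in `S` for which `e ↦ c e • f e`
is summable. -/
def coeffSet (f : E → V) (S : Set E) : Set (E → K) :=
  {c | (∀ e ∉ S, c e = 0) ∧ Summable fun e => c e • f e}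

/-- `f̂(c) = ∑' e, c e • f e`. -/
noncomputable def fhat (f : E → V) (c : E → K) : V := ∑' e, c e • f e

/-- `S` is independent in the topological independence system `M_f` if the only
`c ∈ C_S(f)` with `f̂(c) = 0` is `c = 0`. -/
def TopIndep (f : E → V) (S : Set E) : Prop :=
  ∀ c ∈ coeffSet (K := K) f S, fhat f c = 0 → c = 0

variable {f : E → V} {S T : Set E} {c d : E → K}

omit [T2Space V] in
theorem coeffSet_mono (hST : S ⊆ T) : coeffSet (K := K) f S ⊆ coeffSet f T :=
  fun _ ⟨hsupp, hsum⟩ => ⟨fun e he => hsupp e (fun heS => he (hST heS)), hsum⟩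

omit [T2Space V] in
theorem mem_coeffSet_of_mem_insert {e : E} (hc : c ∈ coeffSet f (insert e S)) (hce : c e = 0) :
    c ∈ coeffSet f S := by
  refine ⟨fun x hx => ?_, hc.2⟩
  obtain rfl | hxe := eq_or_ne x e
  · exact hce
  · exact hc.1 x (by simp [hx, hxe])

omit [T2Space V] in
theorem single_mem_coeffSet [DecidableEq E] {e : E} (he : e ∈ S) (a : K) :
    Pi.single e a ∈ coeffSet f S := by
  refine ⟨fun x hx => by simp [(ne_of_mem_of_not_mem he hx).symm], ?_⟩
  exact summable_of_hasFiniteSupport <| (Set.finite_singleton e).subset <|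
    (Function.support_smul_subset_left _ _).trans Pi.support_single_subset

omit [T2Space V] in
theorem sub_mem_coeffSet [IsTopologicalAddGroup V] (hc : c ∈ coeffSet f S)
    (hd : d ∈ coeffSet f S) : c - d ∈ coeffSet f S := by
  refine ⟨fun e he => by simp [hc.1 e he, hd.1 e he], ?_⟩
  simpa only [Pi.sub_apply, sub_smul] using hc.2.sub hd.2

omit [T2Space V] in
theorem smul_mem_coeffSet [ContinuousConstSMul K V] (a : K) (hc : c ∈ coeffSet f S) :
    a • c ∈ coeffSet f S := by
  refine ⟨fun e he => by simp [hc.1 e he], ?_⟩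
  simpa only [Pi.smul_apply, smul_eq_mul, mul_smul] using hc.2.const_smul a

omit [T2Space V] in
theorem fhat_single [DecidableEq E] (e : E) (a : K) : fhat f (Pi.single e a) = a • f e := by
  rw [fhat, tsum_eq_single e fun x hx => by simp [Pi.single_eq_of_ne hx]]
  simp

theorem fhat_sub [IsTopologicalAddGroup V] (hc : c ∈ coeffSet f S) (hd : d ∈ coeffSet f S) :
    fhat f (c - d) = fhat f c - fhat f d := by
  simp only [fhat, Pi.sub_apply, sub_smul]
  exact hc.2.tsum_sub hd.2

theorem fhat_smul [ContinuousConstSMul K V] (a : K) (hc : c ∈ coeffSet f S) :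
    fhat f (a • c) = a • fhat f c := by
  simp only [fhat, Pi.smul_apply, smul_eq_mul, mul_smul]
  exact hc.2.tsum_const_smul a

omit [T2Space V] in
theorem TopIndep.mono (hT : TopIndep (K := K) f T) (hST : S ⊆ T) : TopIndep (K := K) f S :=
  fun c hc => hT c (coeffSet_mono hST hc)

theorem topIndep_insert_iff [IsTopologicalAddGroup V] [ContinuousConstSMul K V]
    (hS : TopIndep (K := K) f S) {e : E} (he : e ∉ S) :
    TopIndep (K := K) f (insert e S) ↔ ∀ c ∈ coeffSet (K := K) f S, fhat f c ≠ f e := by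
  classical
  have hδ : Pi.single e 1 ∈ coeffSet (K := K) f (insert e S) :=
    single_mem_coeffSet (Set.mem_insert e S) 1
  constructor
  · intro hindep c hc hce
    have hc' := coeffSet_mono (Set.subset_insert e S) hc
    have hdep : fhat f (c - Pi.single e 1) = 0 := by
      rw [fhat_sub hc' hδ, fhat_single, one_smul, hce, sub_self]
    have hde := congrFun (hindep _ (sub_mem_coeffSet hc' hδ) hdep) e
    simp [hc.1 e he] at hde
  · intro hspan c hc hc0
    by_contra hne
    have hce : c e ≠ 0 := fun hce => hne (hS c (mem_coeffSet_of_mem_insert hc hce) hc0)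
    have hd := sub_mem_coeffSet hδ (smul_mem_coeffSet (c e)⁻¹ hc)
    refine hspan _ (mem_coeffSet_of_mem_insert hd ?_) ?_
    · simp [inv_mul_cancel₀ hce]
    · rw [fhat_sub hδ (smul_mem_coeffSet _ hc), fhat_smul _ hc, hc0, fhat_single]
      simp

theorem stmt_19_general [TopologicalSpace K] [IsTopologicalAddGroup V] [ContinuousSMul K V]
    (f : E → V) (S : Set E) (hS : TopIndep (K := K) f S) :
    Maximal (TopIndep (K := K) f) S ↔
      ∀ e : E, ∃ c ∈ coeffSet (K := K) f S, fhat f c = f e := by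
  classical
  rw [Set.maximal_iff_forall_insert fun _ _ hT hST => hT.mono hST]
  simp only [hS, true_and]
  refine forall_congr' fun e => ?_
  by_cases he : e ∈ S
  · simp only [he, not_true_eq_false, IsEmpty.forall_iff, true_iff]
    exact ⟨Pi.single e 1, single_mem_coeffSet he 1, by rw [fhat_single, one_smul]⟩
  · simp only [he, not_false_eq_true, forall_const, topIndep_insert_iff hS he, ne_eq,
      not_forall, not_not, exists_prop]

/-- In a topological independence system over a Hausdorff topological vector
space, with countable index set, an independent set `S` is maximal among independent sets
iff for every `e` one has `f e ∈ f̂(C_S(f))`. -/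
theorem stmt_19 [TopologicalSpace K] [IsTopologicalAddGroup V] [ContinuousSMul K V]
    [Countable E]
    (f : E → V) (S : Set E) (hS : TopIndep (K := K) f S) :
    Maximal (TopIndep (K := K) f) S ↔
      ∀ e : E, ∃ c ∈ coeffSet (K := K) f S, fhat f c = f e :=
  stmt_19_general f S hS

end TopologicalIndependence
end
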